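/- arXiv:2502.13819 — 8 statements merged into one kernel-verified Lean document; each statement's English description precedes it below -/
import Mathlib

section
/- Let M be an n×n real symmetric matrix with eigenvalue λ and associated unit eigenvector u. Fix j ∈ [n] and let M^[j] be M with the j-th row and column removed. Let λ' be an eigenvalue of M^[j] with associated unit eigenvector v, and let X^(j) denote the j-th column of M with its j-th entry removed. Then |⟨v, X^(j)⟩| ≤ |λ − λ'| / |u_j|, provided u_j ≠ 0. -/
open Matrix

/-- Cauchy interlacing/eigenvector perturbation bound: if `M` is symmetric with unit
eigenvector `u` for eigenvalue `λ`, and the principal submatrix `M^[j]` (deleting row and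
column `j`) has unit eigenvector `v` for eigenvalue `λ'`, then
`|⟨v, X^(j)⟩| ≤ |λ − λ'| / |u_j|`, where `X^(j)` is column `j` of `M` with entry `j` removed. -/
theorem stmt_1 (n : ℕ) (M : Matrix (Fin n) (Fin n) ℝ) (hM : M.IsSymm)
    (lam lam' : ℝ) (j : Fin n)
    (u : Fin n → ℝ) (hu_unit : ∑ i, u i ^ 2 = 1)
    (hu : M.mulVec u = lam • u)
    (v : {i : Fin n // i ≠ j} → ℝ) (hv_unit : ∑ i, v i ^ 2 = 1)
    (hv : (M.submatrix (Subtype.val : {i : Fin n // i ≠ j} → Fin n) Subtype.val).mulVec v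
      = lam' • v)
    (huj : u j ≠ 0) :
    |∑ i : {i : Fin n // i ≠ j}, v i * M i.1 j| ≤ |lam - lam'| / |u j| := by
  have hsplit : ∀ f : Fin n → ℝ, ∑ k, f k = f j + ∑ k : {i : Fin n // i ≠ j}, f k.1 := by
    intro f
    have h2 : ∑ k ∈ Finset.univ.erase j, f k = ∑ k : {i : Fin n // i ≠ j}, f k.1 := by
      exact Finset.sum_subtype _ (fun x => by simp) f
    rw [← h2, Finset.add_sum_erase _ f (Finset.mem_univ j)]
  set T := ∑ i : {i : Fin n // i ≠ j}, v i * M i.1 j with hT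
  set S := ∑ i : {i : Fin n // i ≠ j}, v i * u i.1 with hS
  have hsym : ∀ a b : Fin n, M a b = M b a := fun a b => by
    have := congrFun (congrFun hM a) b
    simpa [Matrix.transpose_apply] using this.symm
  have h1 : ∑ i : {i : Fin n // i ≠ j}, v i * (M.mulVec u) i.1 = lam * S := by
    rw [hu]
    simp only [Pi.smul_apply, smul_eq_mul, hS, Finset.mul_sum]
    exact Finset.sum_congr rfl (fun i _ => by ring)
  have h2 : ∀ i : {i : Fin n // i ≠ j}, (M.mulVec u) i.1
      = M i.1 j * u j + ∑ k : {i : Fin n // i ≠ j}, M i.1 k.1 * u k.1 := by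
    intro i
    rw [Matrix.mulVec, dotProduct]
    exact hsplit (fun k => M i.1 k * u k)
  have h3 : ∑ i : {i : Fin n // i ≠ j},
      v i * (∑ k : {i : Fin n // i ≠ j}, M i.1 k.1 * u k.1) = lam' * S := by
    have : ∀ k : {i : Fin n // i ≠ j},
        (∑ i : {i : Fin n // i ≠ j}, M k.1 i.1 * v i) = lam' * v k := by
      intro k
      have := congrFun hv k
      simpa [Matrix.mulVec, dotProduct, Matrix.submatrix] using this
    calc ∑ i : {i : Fin n // i ≠ j}, v i * (∑ k : {i : Fin n // i ≠ j}, M i.1 k.1 * u k.1)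
        = ∑ k : {i : Fin n // i ≠ j}, u k.1 * (∑ i : {i : Fin n // i ≠ j}, M k.1 i.1 * v i) := by
          simp only [Finset.mul_sum]
          rw [Finset.sum_comm]
          exact Finset.sum_congr rfl fun k _ => Finset.sum_congr rfl fun i _ => by
            rw [hsym k.1 i.1]; ring
      _ = ∑ k : {i : Fin n // i ≠ j}, u k.1 * (lam' * v k) := by
          exact Finset.sum_congr rfl fun k _ => by rw [this k]
      _ = lam' * S := by rw [hS, Finset.mul_sum]; exact Finset.sum_congr rfl fun k _ => by ring
  have hkey : u j * T = (lam - lam') * S := by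
    have : lam * S = u j * T + lam' * S := by
      rw [← h1]
      have : ∑ i : {i : Fin n // i ≠ j}, v i * (M.mulVec u) i.1
          = ∑ i : {i : Fin n // i ≠ j}, (v i * (M i.1 j * u j)
            + v i * ∑ k : {i : Fin n // i ≠ j}, M i.1 k.1 * u k.1) := by
        exact Finset.sum_congr rfl fun i _ => by rw [h2 i]; ring
      rw [this, Finset.sum_add_distrib, h3]
      have h4 : ∑ x : {i : Fin n // i ≠ j}, v x * (M x.1 j * u j) = u j * T := by
        rw [hT, Finset.mul_sum]
        exact Finset.sum_congr rfl fun i _ => by ring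
      rw [h4]
    linarith
  have hS1 : |S| ≤ 1 := by
    have hcs2 : S ^ 2 ≤ (∑ i : {i : Fin n // i ≠ j}, v i ^ 2)
        * (∑ i : {i : Fin n // i ≠ j}, u i.1 ^ 2) := by
      have := Finset.sum_mul_sq_le_sq_mul_sq Finset.univ v (fun i => u i.1)
      simpa [hS, pow_two] using this
    have hu2 : (∑ i : {i : Fin n // i ≠ j}, u i.1 ^ 2) ≤ 1 := by
      rw [← hu_unit, hsplit (fun k => u k ^ 2)]
      nlinarith [sq_nonneg (u j)]
    have : S ^ 2 ≤ 1 := by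
      rw [hv_unit, one_mul] at hcs2
      linarith
    nlinarith [abs_nonneg S, sq_abs S]
  rw [le_div_iff₀ (abs_pos.mpr huj)]
  calc |T| * |u j| = |u j * T| := by rw [abs_mul]; ring
    _ = |lam - lam'| * |S| := by rw [hkey, abs_mul]
    _ ≤ |lam - lam'| * 1 := by
        exact mul_le_mul_of_nonneg_left hS1 (abs_nonneg _)
    _ = |lam - lam'| := mul_one _
end

section
/- Fix δ, ρ ∈ (0,1). If v ∈ ℝⁿ is a unit vector that is (δ, ρ)-incompressible (i.e., its Euclidean distance to every vector supported on at most δn coordinates exceeds ρ), then the set of indices i ∈ [n] with (ρ/2)·n^{−1/2} ≤ |v_i| ≤ δ^{−1/2}·n^{−1/2} has cardinality at least ρ²δn/2. -/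
/-- Incompressible vectors are spread: if a unit vector `v ∈ ℝⁿ` has distance greater than
`ρ` from every vector supported on at most `δn` coordinates, then at least `ρ²δn/2` of its
coordinates satisfy `(ρ/2)·n^{−1/2} ≤ |v_i| ≤ δ^{−1/2}·n^{−1/2}`. -/
theorem stmt_4 (n : ℕ) (δ ρ : ℝ) (hδ : δ ∈ Set.Ioo (0:ℝ) 1) (hρ : ρ ∈ Set.Ioo (0:ℝ) 1)
    (v : Fin n → ℝ) (hv : ∑ i, v i ^ 2 = 1)
    (hinc : ∀ w : Fin n → ℝ,
      ((Finset.univ.filter (fun i => w i ≠ 0)).card : ℝ) ≤ δ * n →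
      ρ < Real.sqrt (∑ i, (v i - w i) ^ 2)) :
    ρ ^ 2 * δ * n / 2 ≤
      ((Finset.univ.filter
        (fun i : Fin n => ρ / 2 / Real.sqrt n ≤ |v i| ∧
          |v i| ≤ 1 / (Real.sqrt δ * Real.sqrt n))).card : ℝ) := by
  obtain ⟨hδ0, hδ1⟩ := hδ
  obtain ⟨hρ0, hρ1⟩ := hρ
  rcases Nat.eq_zero_or_pos n with hn | hn
  · subst hn; simp at hv
  have hn0 : (0:ℝ) < n := by exact_mod_cast hn
  set b : ℝ := 1 / (Real.sqrt δ * Real.sqrt n) with hb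
  have hbpos : 0 < b := by
    apply div_pos one_pos
    exact mul_pos (Real.sqrt_pos.2 hδ0) (Real.sqrt_pos.2 hn0)
  have hbsq : b ^ 2 = 1 / (δ * n) := by
    rw [hb, div_pow, mul_pow, Real.sq_sqrt hδ0.le, Real.sq_sqrt hn0.le, one_pow]
  set B : Finset (Fin n) := Finset.univ.filter (fun i => b < |v i|) with hBdef
  set T : Finset (Fin n) := Finset.univ.filter
      (fun i : Fin n => ρ / 2 / Real.sqrt n ≤ |v i| ∧ |v i| ≤ b) with hTdef
  -- bound on B.card
  have hBbound : ∀ i ∈ B, 1 / (δ * n) ≤ v i ^ 2 := by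
    intro i hi
    rw [hBdef, Finset.mem_filter] at hi
    rw [← hbsq, ← sq_abs (v i)]
    exact pow_le_pow_left₀ hbpos.le hi.2.le 2
  have hsumB : (B.card : ℝ) * (1 / (δ * n)) ≤ ∑ i ∈ B, v i ^ 2 := by
    calc (B.card : ℝ) * (1 / (δ * n)) = ∑ _i ∈ B, 1 / (δ * n) := by
          rw [Finset.sum_const, nsmul_eq_mul]
      _ ≤ ∑ i ∈ B, v i ^ 2 := Finset.sum_le_sum hBbound
  have hsumB1 : ∑ i ∈ B, v i ^ 2 ≤ 1 := by
    rw [← hv]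
    exact Finset.sum_le_sum_of_subset_of_nonneg (Finset.subset_univ B)
      (fun i _ _ => sq_nonneg _)
  have hδn : 0 < δ * n := mul_pos hδ0 hn0
  have hcardB : (B.card : ℝ) ≤ δ * n := by
    have := hsumB.trans hsumB1
    rw [mul_one_div, div_le_one hδn] at this
    exact this
  -- apply incompressibility with w = v on B
  set w : Fin n → ℝ := fun i => if i ∈ B then v i else 0 with hwdef
  have hsupp : ((Finset.univ.filter (fun i => w i ≠ 0)).card : ℝ) ≤ δ * n := by
    refine le_trans ?_ hcardB
    have hsub : Finset.univ.filter (fun i => w i ≠ 0) ⊆ B := by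
      intro i hi
      rw [Finset.mem_filter] at hi
      by_contra hiB
      exact hi.2 (by simp [hwdef, hiB])
    exact_mod_cast Finset.card_le_card hsub
  have hkey := hinc w hsupp
  have hdiff : ∑ i, (v i - w i) ^ 2 = ∑ i ∈ Finset.univ \ B, v i ^ 2 := by
    rw [← Finset.sum_subset (Finset.subset_univ (Finset.univ \ B))]
    · apply Finset.sum_congr rfl
      intro i hi
      rw [Finset.mem_sdiff] at hi
      simp [hwdef, hi.2]
    · intro i _ hi
      rw [Finset.mem_sdiff] at hi
      have : i ∈ B := by simpa using hi
      simp [hwdef, this]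
  have hρ2 : ρ ^ 2 < ∑ i ∈ Finset.univ \ B, v i ^ 2 := by
    rw [← hdiff]
    have := (Real.lt_sqrt hρ0.le).1 hkey
    exact this
  -- split the complement of B
  have hsplit : Finset.univ \ B = T ∪ ((Finset.univ \ B).filter (fun i => |v i| < ρ / 2 / Real.sqrt n)) := by
    ext i
    simp only [Finset.mem_union, Finset.mem_sdiff, Finset.mem_filter, hTdef, hBdef,
      Finset.mem_univ, true_and, not_lt]
    constructor
    · intro h
      rcases le_or_gt (ρ / 2 / Real.sqrt n) (|v i|) with h1 | h1
      · exact Or.inl ⟨h1, h⟩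
      · exact Or.inr ⟨h, h1⟩
    · rintro (⟨h1, h2⟩ | ⟨h2, _⟩) <;> exact h2
  have hdisj : Disjoint T ((Finset.univ \ B).filter (fun i => |v i| < ρ / 2 / Real.sqrt n)) := by
    rw [Finset.disjoint_left]
    intro i hi hi'
    rw [hTdef, Finset.mem_filter] at hi
    rw [Finset.mem_filter] at hi'
    exact absurd hi.2.1 (not_le.2 hi'.2)
  have hsmall : ∑ i ∈ (Finset.univ \ B).filter (fun i => |v i| < ρ / 2 / Real.sqrt n), v i ^ 2
      ≤ ρ ^ 2 / 4 := by
    have hstep : ∀ i ∈ (Finset.univ \ B).filter (fun i => |v i| < ρ / 2 / Real.sqrt n),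
        v i ^ 2 ≤ ρ ^ 2 / (4 * n) := by
      intro i hi
      rw [Finset.mem_filter] at hi
      have h1 : v i ^ 2 ≤ (ρ / 2 / Real.sqrt n) ^ 2 := by
        rw [← sq_abs (v i)]
        exact pow_le_pow_left₀ (abs_nonneg _) hi.2.le 2
      have h2 : (ρ / 2 / Real.sqrt n) ^ 2 = ρ ^ 2 / (4 * n) := by
        rw [div_pow, div_pow, Real.sq_sqrt hn0.le]
        ring
      linarith
    calc ∑ i ∈ (Finset.univ \ B).filter (fun i => |v i| < ρ / 2 / Real.sqrt n), v i ^ 2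
        ≤ ∑ _i ∈ (Finset.univ \ B).filter (fun i => |v i| < ρ / 2 / Real.sqrt n),
          ρ ^ 2 / (4 * n) := Finset.sum_le_sum hstep
      _ = ((((Finset.univ \ B).filter (fun i => |v i| < ρ / 2 / Real.sqrt n)).card : ℝ))
          * (ρ ^ 2 / (4 * n)) := by rw [Finset.sum_const, nsmul_eq_mul]
      _ ≤ (n : ℝ) * (ρ ^ 2 / (4 * n)) := by
          apply mul_le_mul_of_nonneg_right
          · exact_mod_cast (Finset.card_le_card (Finset.subset_univ _)).trans
              (le_of_eq (Finset.card_univ.trans (Fintype.card_fin n)))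
          · positivity
      _ = ρ ^ 2 / 4 := by field_simp
  have hTsum : ∑ i ∈ T, v i ^ 2 ≤ (T.card : ℝ) * (1 / (δ * n)) := by
    calc ∑ i ∈ T, v i ^ 2 ≤ ∑ _i ∈ T, 1 / (δ * n) := by
          apply Finset.sum_le_sum
          intro i hi
          rw [hTdef, Finset.mem_filter] at hi
          rw [← hbsq, ← sq_abs (v i)]
          exact pow_le_pow_left₀ (abs_nonneg _) hi.2.2 2
      _ = (T.card : ℝ) * (1 / (δ * n)) := by rw [Finset.sum_const, nsmul_eq_mul]
  have hfinal : ρ ^ 2 < (T.card : ℝ) * (1 / (δ * n)) + ρ ^ 2 / 4 := by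
    have := hρ2
    rw [hsplit, Finset.sum_union hdisj] at this
    linarith
  have : ρ ^ 2 * δ * n / 2 ≤ (T.card : ℝ) := by
    rw [mul_one_div] at hfinal
    have h3 : (3 / 4) * ρ ^ 2 < (T.card : ℝ) / (δ * n) := by linarith
    have h4 := (lt_div_iff₀ hδn).1 h3
    nlinarith [sq_nonneg ρ]
  exact this
end

section
/- Let v ∈ S^{n−1} be a unit vector and D ⊆ [n] a set of indices such that κ₀ n^{−1/2} ≤ |v_i| ≤ κ₁ n^{−1/2} for all i ∈ D, where 0 < κ₀ ≤ κ₁. Let γ < κ₀ √(|D|/(2n)). Then the essential least common denominator D_{α,γ}(v) := inf{ θ > 0 : dist(θv, ℤⁿ) ≤ min(√(αn), γ‖θv‖₂) } satisfies D_{α,γ}(v) ≥ √n/(2κ₁). -/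
/-- key pointwise lemma: if `|x| ≤ 1/2` then `x^2 ≤ (x - p)^2` for any integer `p`. -/
lemma sq_le_sq_sub_int (x : ℝ) (hx : |x| ≤ 1/2) (p : ℤ) : x ^ 2 ≤ (x - (p : ℝ)) ^ 2 := by
  rcases eq_or_ne p 0 with hp | hp
  · simp [hp]
  · have h1 : (1 : ℝ) ≤ |(p : ℝ)| := by exact_mod_cast Int.one_le_abs hp
    have h2 : |x| ≤ |x - (p : ℝ)| := by
      have := abs_sub_abs_le_abs_sub (p : ℝ) x
      have habs : |(p:ℝ) - x| = |x - (p:ℝ)| := abs_sub_comm _ _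
      linarith [abs_nonneg x]
    calc x ^ 2 = |x| ^ 2 := (sq_abs x).symm
      _ ≤ |x - (p:ℝ)| ^ 2 := by nlinarith [abs_nonneg x]
      _ = (x - (p:ℝ)) ^ 2 := sq_abs _

/-- Lower bound on the essential LCD: if a unit vector `v` has `κ₀/√n ≤ |v_i| ≤ κ₁/√n` for
all `i` in a set `D`, and `γ < κ₀ √(|D|/(2n))`, then every `θ > 0` with
`dist(θv, ℤⁿ) ≤ min(√(αn), γ‖θv‖₂)` satisfies `θ ≥ √n/(2κ₁)`; i.e. `D_{α,γ}(v) ≥ √n/(2κ₁)`. -/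
theorem stmt_5 (n : ℕ) (α γ κ₀ κ₁ : ℝ) (hα : 0 < α) (hγ : 0 < γ) (hγ1 : γ < 1)
    (hκ₀ : 0 < κ₀) (hκ : κ₀ ≤ κ₁)
    (v : Fin n → ℝ) (hv : ∑ i, v i ^ 2 = 1)
    (D : Finset (Fin n))
    (hD : ∀ i ∈ D, κ₀ / Real.sqrt n ≤ |v i| ∧ |v i| ≤ κ₁ / Real.sqrt n)
    (hγD : γ < κ₀ * Real.sqrt ((D.card : ℝ) / (2 * n)))
    (θ : ℝ) (hθ : 0 < θ)
    (hθmem : (⨅ p : Fin n → ℤ, Real.sqrt (∑ i, (θ * v i - (p i : ℝ)) ^ 2)) ≤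
      min (Real.sqrt (α * n)) (γ * Real.sqrt (∑ i, (θ * v i) ^ 2))) :
    Real.sqrt n / (2 * κ₁) ≤ θ := by
  by_contra hcon
  push_neg at hcon
  have hκ₁ : 0 < κ₁ := lt_of_lt_of_le hκ₀ hκ
  -- D is nonempty
  have hDpos : 0 < D.card := by
    rcases Nat.eq_zero_or_pos D.card with h0 | h
    · rw [h0] at hγD
      simp at hγD
      linarith
    · exact h
  -- n > 0
  have hnpos : 0 < n := by
    obtain ⟨i, _⟩ := Finset.card_pos.mp hDpos
    exact i.pos
  have hnR : (0 : ℝ) < n := by exact_mod_cast hnpos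
  have hsn : 0 < Real.sqrt n := Real.sqrt_pos.mpr hnR
  have hcardR : (0 : ℝ) < (D.card : ℝ) := by exact_mod_cast hDpos
  -- each coordinate in D has |θ v i| ≤ 1/2
  have hhalf : ∀ i ∈ D, |θ * v i| ≤ 1/2 := by
    intro i hi
    have h2 := (hD i hi).2
    have : |θ * v i| = θ * |v i| := by
      rw [abs_mul, abs_of_pos hθ]
    rw [this]
    have h3 : θ * |v i| ≤ θ * (κ₁ / Real.sqrt n) :=
      mul_le_mul_of_nonneg_left h2 hθ.le
    have h4 : θ * (κ₁ / Real.sqrt n) < (Real.sqrt n / (2 * κ₁)) * (κ₁ / Real.sqrt n) := by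
      apply mul_lt_mul_of_pos_right hcon
      positivity
    have h5 : (Real.sqrt n / (2 * κ₁)) * (κ₁ / Real.sqrt n) = 1/2 := by
      field_simp
    linarith
  -- the lower bound constant
  set c : ℝ := θ * κ₀ * Real.sqrt (D.card) / Real.sqrt n with hc
  have hcpos : 0 < c := by positivity
  -- c ≤ every distance
  have hlow : ∀ p : Fin n → ℤ, c ≤ Real.sqrt (∑ i, (θ * v i - (p i : ℝ)) ^ 2) := by
    intro p
    rw [show c = Real.sqrt (c ^ 2) from (Real.sqrt_sq hcpos.le).symm]
    apply Real.sqrt_le_sqrt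
    have hsum1 : ∑ i ∈ D, (θ * v i - (p i : ℝ)) ^ 2 ≤ ∑ i, (θ * v i - (p i : ℝ)) ^ 2 :=
      Finset.sum_le_sum_of_subset_of_nonneg (Finset.subset_univ D)
        (fun i _ _ => sq_nonneg _)
    have hsum2 : ∑ i ∈ D, (θ * κ₀ / Real.sqrt n) ^ 2 ≤ ∑ i ∈ D, (θ * v i - (p i : ℝ)) ^ 2 := by
      apply Finset.sum_le_sum
      intro i hi
      have h1 := (hD i hi).1
      have key : (θ * v i) ^ 2 ≤ (θ * v i - (p i : ℝ)) ^ 2 :=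
        sq_le_sq_sub_int _ (hhalf i hi) _
      have h2 : (θ * κ₀ / Real.sqrt n) ^ 2 ≤ (θ * v i) ^ 2 := by
        have ha : θ * (κ₀ / Real.sqrt n) ≤ θ * |v i| :=
          mul_le_mul_of_nonneg_left h1 hθ.le
        have hb : (θ * |v i|) ^ 2 = (θ * v i) ^ 2 := by
          rw [mul_pow, mul_pow, sq_abs]
        have hpos : 0 ≤ θ * (κ₀ / Real.sqrt n) := by positivity
        calc (θ * κ₀ / Real.sqrt n) ^ 2 = (θ * (κ₀ / Real.sqrt n)) ^ 2 := by ring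
          _ ≤ (θ * |v i|) ^ 2 := by nlinarith
          _ = (θ * v i) ^ 2 := hb
      linarith
    have heval : ∑ i ∈ D, (θ * κ₀ / Real.sqrt n) ^ 2 = c ^ 2 := by
      rw [Finset.sum_const, nsmul_eq_mul, hc]
      rw [div_pow, div_pow, mul_pow, mul_pow (θ * κ₀)]
      rw [Real.sq_sqrt hcardR.le, Real.sq_sqrt hnR.le]
      ring
    linarith
  have hinf : c ≤ ⨅ p : Fin n → ℤ, Real.sqrt (∑ i, (θ * v i - (p i : ℝ)) ^ 2) :=
    le_ciInf hlow
  -- the RHS equals at most γ θ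
  have hnorm : ∑ i, (θ * v i) ^ 2 = θ ^ 2 := by
    simp_rw [mul_pow]
    rw [← Finset.mul_sum, hv, mul_one]
  have hrhs : γ * Real.sqrt (∑ i, (θ * v i) ^ 2) = γ * θ := by
    rw [hnorm, Real.sqrt_sq hθ.le]
  -- γ θ < c
  have hgc : γ * θ < c := by
    have hs2 : (1 : ℝ) < Real.sqrt 2 := by
      rw [show (1:ℝ) = Real.sqrt 1 from (Real.sqrt_one).symm]
      exact Real.sqrt_lt_sqrt (by norm_num) (by norm_num)
    have hscard : 0 < Real.sqrt (D.card : ℝ) := Real.sqrt_pos.mpr hcardR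
    have e1 : Real.sqrt ((D.card : ℝ) / (2 * n)) =
        Real.sqrt (D.card : ℝ) / (Real.sqrt 2 * Real.sqrt n) := by
      rw [Real.sqrt_div hcardR.le, Real.sqrt_mul (by norm_num : (0:ℝ) ≤ 2)]
    have h1 : Real.sqrt (D.card : ℝ) / (Real.sqrt 2 * Real.sqrt n) <
        Real.sqrt (D.card : ℝ) / Real.sqrt n := by
      apply div_lt_div_of_pos_left hscard hsn
      nlinarith
    have h2 : γ < κ₀ * (Real.sqrt (D.card : ℝ) / Real.sqrt n) := by
      rw [e1] at hγD
      nlinarith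
    calc γ * θ < (κ₀ * (Real.sqrt (D.card : ℝ) / Real.sqrt n)) * θ :=
          mul_lt_mul_of_pos_right h2 hθ
      _ = c := by rw [hc]; ring
  have : c ≤ γ * θ := by
    calc c ≤ _ := hinf
      _ ≤ min (Real.sqrt (α * n)) (γ * Real.sqrt (∑ i, (θ * v i) ^ 2)) := hθmem
      _ ≤ γ * Real.sqrt (∑ i, (θ * v i) ^ 2) := min_le_right _ _
      _ = γ * θ := hrhs
  linarith
end

section
/- Let ξ be a real random variable with mean 0, variance 1, and subgaussian moment ‖ξ‖_{ψ₂} ≤ B. Let ξ' be an independent copy of ξ and set ξ̄ = ξ − ξ'. Then ℙ(1 < |ξ̄| < 16B²) ≥ 1/(2⁷ B⁴). -/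
open MeasureTheory ProbabilityTheory

set_option maxHeartbeats 1000000 in
/-- If `ξ` has mean 0, variance 1 and subgaussian moment `‖ξ‖_{ψ₂} ≤ B`, and `ξ'` is an
independent copy of `ξ`, then `ℙ(1 < |ξ − ξ'| < 16B²) ≥ 1/(2⁷B⁴)`. -/
theorem stmt_6 {Ω : Type*} [MeasurableSpace Ω] (μ : Measure Ω) [IsProbabilityMeasure μ]
    (B : ℝ) (hB : 1 ≤ B)
    (X X' : Ω → ℝ) (hXm : Measurable X) (hX'm : Measurable X')
    (hindep : IndepFun X X' μ) (hid : IdentDistrib X X' μ μ)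
    (hmean : ∫ ω, X ω ∂μ = 0) (hvar : ∫ ω, (X ω) ^ 2 ∂μ = 1)
    (hint : ∀ p : ℝ, 1 ≤ p → Integrable (fun ω => |X ω| ^ p) μ)
    (hsub : ∀ p : ℝ, 1 ≤ p → (∫ ω, |X ω| ^ p ∂μ) ^ (1 / p) ≤ Real.sqrt p * B) :
    1 / (2 ^ 7 * B ^ 4) ≤
      (μ {ω | 1 < |X ω - X' ω| ∧ |X ω - X' ω| < 16 * B ^ 2}).toReal := by
  have hB4 : (1 : ℝ) ≤ B ^ 4 := one_le_pow₀ hB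
  have hBpos : (0 : ℝ) < B := lt_of_lt_of_le one_pos hB
  -- integrability of powers of X
  have iX : ∀ n : ℕ, 1 ≤ n → Integrable (fun ω => X ω ^ n) μ := by
    intro n hn
    have h := hint (n : ℝ) (by exact_mod_cast hn)
    have h' : Integrable (fun ω => |X ω| ^ n) μ := by
      refine h.congr (Filter.Eventually.of_forall fun ω => ?_)
      simp [Real.rpow_natCast]
    rw [← integrable_norm_iff (hXm.pow_const n).aestronglyMeasurable]
    refine h'.congr (Filter.Eventually.of_forall fun ω => ?_)
    simp [Real.norm_eq_abs, abs_pow]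
  -- identically distributed powers
  have hpow : ∀ n : ℕ, IdentDistrib (fun ω => X ω ^ n) (fun ω => X' ω ^ n) μ μ :=
    fun n => hid.comp (measurable_id.pow_const n)
  have iX' : ∀ n : ℕ, 1 ≤ n → Integrable (fun ω => X' ω ^ n) μ :=
    fun n hn => (hpow n).integrable_iff.mp (iX n hn)
  have eX' : ∀ n : ℕ, ∫ ω, X' ω ^ n ∂μ = ∫ ω, X ω ^ n ∂μ :=
    fun n => ((hpow n).integral_eq).symm
  -- products
  have ip : ∀ i j : ℕ, 1 ≤ i → 1 ≤ j →
      Integrable (fun ω => X ω ^ i * X' ω ^ j) μ := by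
    intro i j hi hj
    exact (hindep.comp (measurable_id.pow_const i) (measurable_id.pow_const j)).integrable_mul
      (iX i hi) (iX' j hj)
  have ep : ∀ i j : ℕ, ∫ ω, X ω ^ i * X' ω ^ j ∂μ =
      (∫ ω, X ω ^ i ∂μ) * (∫ ω, X' ω ^ j ∂μ) := by
    intro i j
    exact (hindep.comp (measurable_id.pow_const i) (measurable_id.pow_const j)).integral_fun_mul_eq_mul_integral
      (hXm.pow_const i).aestronglyMeasurable (hX'm.pow_const j).aestronglyMeasurable
  have hX1 : ∫ ω, X ω ^ 1 ∂μ = 0 := by simpa using hmean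
  have hX'1 : ∫ ω, X' ω ^ 1 ∂μ = 0 := by rw [eX' 1]; exact hX1
  have hX'2 : ∫ ω, X' ω ^ 2 ∂μ = 1 := by rw [eX' 2]; exact hvar
  -- fourth moment bound
  set m4 : ℝ := ∫ ω, X ω ^ 4 ∂μ with hm4def
  have m4nonneg : 0 ≤ m4 := integral_nonneg fun ω => by positivity
  have hm4 : m4 ≤ 16 * B ^ 4 := by
    have h4 := hsub 4 (by norm_num)
    have heq : ∫ ω, |X ω| ^ (4 : ℝ) ∂μ = m4 := by
      refine integral_congr_ae (Filter.Eventually.of_forall fun ω => ?_)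
      show |X ω| ^ (4:ℝ) = X ω ^ 4
      rw [show ((4:ℝ)) = ((4:ℕ):ℝ) by norm_num, Real.rpow_natCast, ← abs_pow]
      exact abs_of_nonneg (by positivity)
    rw [heq] at h4
    have hs4 : Real.sqrt 4 = 2 := by
      rw [show (4:ℝ) = 2^2 by norm_num, Real.sqrt_sq (by norm_num : (0:ℝ) ≤ 2)]
    rw [hs4] at h4
    have : (m4 ^ (1/4 : ℝ)) ^ (4:ℕ) ≤ (2 * B) ^ (4:ℕ) :=
      pow_le_pow_left₀ (Real.rpow_nonneg m4nonneg _) h4 4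
    rwa [← Real.rpow_natCast (m4 ^ (1/4:ℝ)) 4, ← Real.rpow_mul m4nonneg,
      show (1/4 : ℝ) * (4:ℕ) = 1 by norm_num, Real.rpow_one,
      show ((2:ℝ) * B) ^ (4:ℕ) = 16 * B ^ 4 by ring] at this
  -- second moment of Y := X - X'
  have iY2 : Integrable (fun ω => (X ω - X' ω) ^ 2) μ := by
    have hexp : (fun ω => (X ω - X' ω) ^ 2)
        = fun ω => (X ω ^ 2 + X' ω ^ 2) - 2 * (X ω ^ 1 * X' ω ^ 1) := by
      funext ω; ring
    rw [hexp]
    exact ((iX 2 one_le_two).add (iX' 2 one_le_two)).sub ((ip 1 1 le_rfl le_rfl).const_mul 2)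
  have ia2 : Integrable (fun ω => X ω ^ 2 + X' ω ^ 2) μ :=
    (iX 2 one_le_two).add (iX' 2 one_le_two)
  have ib2 : Integrable (fun ω => 2 * (X ω ^ 1 * X' ω ^ 1)) μ :=
    (ip 1 1 le_rfl le_rfl).const_mul 2
  have EY2 : ∫ ω, (X ω - X' ω) ^ 2 ∂μ = 2 := by
    have hexp : (fun ω => (X ω - X' ω) ^ 2)
        = fun ω => (X ω ^ 2 + X' ω ^ 2) - 2 * (X ω ^ 1 * X' ω ^ 1) := by
      funext ω; ring
    rw [show (∫ ω, (X ω - X' ω) ^ 2 ∂μ)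
        = ∫ ω, (X ω ^ 2 + X' ω ^ 2) - 2 * (X ω ^ 1 * X' ω ^ 1) ∂μ by rw [← hexp],
      integral_sub ia2 ib2,
      integral_add (iX 2 one_le_two) (iX' 2 one_le_two), integral_const_mul 2,
      ep 1 1, hX1, hX'1, hvar, hX'2]
    ring
  -- fourth moment of Y
  have iY4 : Integrable (fun ω => (X ω - X' ω) ^ 4) μ := by
    have hexp : (fun ω => (X ω - X' ω) ^ 4)
        = fun ω => (X ω ^ 4 + X' ω ^ 4 + 6 * (X ω ^ 2 * X' ω ^ 2))
            - (4 * (X ω ^ 3 * X' ω ^ 1) + 4 * (X ω ^ 1 * X' ω ^ 3)) := by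
      funext ω; ring
    rw [hexp]
    exact (((iX 4 (by norm_num)).add (iX' 4 (by norm_num))).add
        ((ip 2 2 one_le_two one_le_two).const_mul 6)).sub
      (((ip 3 1 (by norm_num) le_rfl).const_mul 4).add
        ((ip 1 3 le_rfl (by norm_num)).const_mul 4))
  have EY4 : ∫ ω, (X ω - X' ω) ^ 4 ∂μ = 2 * m4 + 6 := by
    have hexp : (fun ω => (X ω - X' ω) ^ 4)
        = fun ω => (X ω ^ 4 + X' ω ^ 4 + 6 * (X ω ^ 2 * X' ω ^ 2))
            - (4 * (X ω ^ 3 * X' ω ^ 1) + 4 * (X ω ^ 1 * X' ω ^ 3)) := by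
      funext ω; ring
    have ia4 : Integrable (fun ω => X ω ^ 4 + X' ω ^ 4 + 6 * (X ω ^ 2 * X' ω ^ 2)) μ :=
      ((iX 4 (by norm_num)).add (iX' 4 (by norm_num))).add
        ((ip 2 2 one_le_two one_le_two).const_mul 6)
    have ia4' : Integrable (fun ω => X ω ^ 4 + X' ω ^ 4) μ :=
      (iX 4 (by norm_num)).add (iX' 4 (by norm_num))
    have ib4 : Integrable
        (fun ω => 4 * (X ω ^ 3 * X' ω ^ 1) + 4 * (X ω ^ 1 * X' ω ^ 3)) μ :=
      ((ip 3 1 (by norm_num) le_rfl).const_mul 4).add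
        ((ip 1 3 le_rfl (by norm_num)).const_mul 4)
    rw [show (∫ ω, (X ω - X' ω) ^ 4 ∂μ)
        = ∫ ω, (X ω ^ 4 + X' ω ^ 4 + 6 * (X ω ^ 2 * X' ω ^ 2))
            - (4 * (X ω ^ 3 * X' ω ^ 1) + 4 * (X ω ^ 1 * X' ω ^ 3)) ∂μ by rw [← hexp],
      integral_sub ia4 ib4,
      integral_add ia4' ((ip 2 2 one_le_two one_le_two).const_mul 6),
      integral_add (iX 4 (by norm_num)) (iX' 4 (by norm_num)),
      integral_add ((ip 3 1 (by norm_num) le_rfl).const_mul 4)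
        ((ip 1 3 le_rfl (by norm_num)).const_mul 4),
      integral_const_mul 6, integral_const_mul 4, integral_const_mul 4,
      ep 2 2, ep 3 1, ep 1 3, hX1, hX'1, hvar, hX'2, eX' 4]
    ring
  -- the three regions
  have h16 : (1:ℝ) < 16 * B ^ 2 := by nlinarith
  set A : Set Ω := {ω | 1 < |X ω - X' ω| ∧ |X ω - X' ω| < 16 * B ^ 2} with hAdef
  set H : Set Ω := {ω | |X ω - X' ω| ≤ 1} with hHdef
  set T : Set Ω := {ω | 16 * B ^ 2 ≤ |X ω - X' ω|} with hTdef
  have hYm : Measurable fun ω => X ω - X' ω := hXm.sub hX'm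
  have hYabs : Measurable fun ω => |X ω - X' ω| := hYm.abs
  have mA : MeasurableSet A :=
    (measurableSet_lt measurable_const hYabs).inter (measurableSet_lt hYabs measurable_const)
  have mH : MeasurableSet H := measurableSet_le hYabs measurable_const
  have mT : MeasurableSet T := measurableSet_le measurable_const hYabs
  have hdecomp : ∀ ω, (X ω - X' ω) ^ 2 =
      H.indicator (fun ω => (X ω - X' ω) ^ 2) ω
        + A.indicator (fun ω => (X ω - X' ω) ^ 2) ω
        + T.indicator (fun ω => (X ω - X' ω) ^ 2) ω := by
    intro ω
    by_cases h1 : |X ω - X' ω| ≤ 1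
    · have h2 : ¬(1 < |X ω - X' ω| ∧ |X ω - X' ω| < 16 * B ^ 2) :=
        fun hc => absurd h1 (not_le.mpr hc.1)
      have h3 : ¬(16 * B ^ 2 ≤ |X ω - X' ω|) := not_le.mpr (lt_of_le_of_lt h1 h16)
      simp [hHdef, hAdef, hTdef, Set.indicator_apply, Set.mem_setOf_eq, h1, h2, h3]
    · by_cases h' : |X ω - X' ω| < 16 * B ^ 2
      · have h2 : 1 < |X ω - X' ω| ∧ |X ω - X' ω| < 16 * B ^ 2 := ⟨not_le.mp h1, h'⟩
        have h3 : ¬(16 * B ^ 2 ≤ |X ω - X' ω|) := not_le.mpr h'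
        simp [hHdef, hAdef, hTdef, Set.indicator_apply, Set.mem_setOf_eq, h1, h2, h3]
      · have h2 : ¬(1 < |X ω - X' ω| ∧ |X ω - X' ω| < 16 * B ^ 2) := fun hc => absurd hc.2 h'
        have h3 : 16 * B ^ 2 ≤ |X ω - X' ω| := not_lt.mp h'
        simp [hHdef, hAdef, hTdef, Set.indicator_apply, Set.mem_setOf_eq, h1, h2, h3]
  have iH : Integrable (H.indicator fun ω => (X ω - X' ω) ^ 2) μ := iY2.indicator mH
  have iA : Integrable (A.indicator fun ω => (X ω - X' ω) ^ 2) μ := iY2.indicator mA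
  have iT : Integrable (T.indicator fun ω => (X ω - X' ω) ^ 2) μ := iY2.indicator mT
  have iHA : Integrable (fun ω => H.indicator (fun ω => (X ω - X' ω) ^ 2) ω
      + A.indicator (fun ω => (X ω - X' ω) ^ 2) ω) μ := iH.add iA
  have hsum : (2:ℝ) = (∫ ω, H.indicator (fun ω => (X ω - X' ω) ^ 2) ω ∂μ)
      + (∫ ω, A.indicator (fun ω => (X ω - X' ω) ^ 2) ω ∂μ)
      + (∫ ω, T.indicator (fun ω => (X ω - X' ω) ^ 2) ω ∂μ) := by
    rw [← EY2]
    rw [show (∫ ω, (X ω - X' ω) ^ 2 ∂μ)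
        = ∫ ω, (H.indicator (fun ω => (X ω - X' ω) ^ 2) ω
            + A.indicator (fun ω => (X ω - X' ω) ^ 2) ω)
            + T.indicator (fun ω => (X ω - X' ω) ^ 2) ω ∂μ from
      integral_congr_ae (Filter.Eventually.of_forall hdecomp),
      integral_add iHA iT, integral_add iH iA]
  -- head bound
  have hHle : ∫ ω, H.indicator (fun ω => (X ω - X' ω) ^ 2) ω ∂μ ≤ 1 := by
    have hb : ∀ ω, H.indicator (fun ω => (X ω - X' ω) ^ 2) ω ≤ 1 := by
      intro ω
      rw [Set.indicator_apply]
      split_ifs with h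
      · have h' : |X ω - X' ω| ≤ 1 := h
        nlinarith [sq_abs (X ω - X' ω), abs_nonneg (X ω - X' ω)]
      · norm_num
    calc ∫ ω, H.indicator (fun ω => (X ω - X' ω) ^ 2) ω ∂μ
        ≤ ∫ _, (1:ℝ) ∂μ := integral_mono iH (integrable_const 1) hb
      _ = 1 := by simp
  -- tail bound
  have hTle : ∫ ω, T.indicator (fun ω => (X ω - X' ω) ^ 2) ω ∂μ
      ≤ (2 * m4 + 6) / (256 * B ^ 4) := by
    have hb : ∀ ω, T.indicator (fun ω => (X ω - X' ω) ^ 2) ω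
        ≤ (X ω - X' ω) ^ 4 / (256 * B ^ 4) := by
      intro ω
      rw [Set.indicator_apply]
      split_ifs with h
      · rw [le_div_iff₀ (by positivity)]
        have h' : 16 * B ^ 2 ≤ |X ω - X' ω| := h
        have h2 : 256 * B ^ 4 ≤ (X ω - X' ω) ^ 2 := by
          nlinarith [mul_self_le_mul_self (by positivity : (0:ℝ) ≤ 16 * B ^ 2) h',
            abs_mul_abs_self (X ω - X' ω)]
        nlinarith [h2, sq_nonneg (X ω - X' ω)]
      · positivity
    calc ∫ ω, T.indicator (fun ω => (X ω - X' ω) ^ 2) ω ∂μ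
        ≤ ∫ ω, (X ω - X' ω) ^ 4 / (256 * B ^ 4) ∂μ :=
          integral_mono iT (iY4.div_const _) hb
      _ = (2 * m4 + 6) / (256 * B ^ 4) := by rw [integral_div, EY4]
  -- middle lower bound
  have hmid : (109:ℝ)/128 ≤ ∫ ω, A.indicator (fun ω => (X ω - X' ω) ^ 2) ω ∂μ := by
    have h1 : (2 * m4 + 6) / (256 * B ^ 4) ≤ 19/128 := by
      rw [div_le_iff₀ (by positivity)]
      nlinarith
    linarith
  -- Cauchy–Schwarz
  have haind : ∫ ω, A.indicator (fun ω => (X ω - X' ω) ^ 2) ω ∂μ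
      = ∫ ω, (X ω - X' ω) ^ 2 * A.indicator (fun _ => (1:ℝ)) ω ∂μ := by
    refine integral_congr_ae (Filter.Eventually.of_forall fun ω => ?_)
    show A.indicator (fun ω => (X ω - X' ω) ^ 2) ω
      = (X ω - X' ω) ^ 2 * A.indicator (fun _ => (1:ℝ)) ω
    by_cases h : ω ∈ A <;>
      simp [Set.indicator_of_mem, Set.indicator_of_notMem, h]
  have memf : MemLp (fun ω => (X ω - X' ω) ^ 2) (ENNReal.ofReal 2) μ := by
    rw [ENNReal.ofReal_ofNat]
    refine (memLp_two_iff_integrable_sq (hYm.pow_const 2).aestronglyMeasurable).mpr ?_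
    refine iY4.congr (Filter.Eventually.of_forall fun ω => ?_)
    show (X ω - X' ω) ^ 4 = ((fun ω => (X ω - X' ω) ^ 2) ^ 2) ω
    simp only [Pi.pow_apply]; ring
  have memg : MemLp (A.indicator fun _ => (1:ℝ)) (ENNReal.ofReal 2) μ := by
    rw [ENNReal.ofReal_ofNat]
    exact memLp_indicator_const 2 mA 1 (Or.inr (measure_ne_top μ A))
  have holder := integral_mul_le_Lp_mul_Lq_of_nonneg
    (Real.holderConjugate_iff.mpr ⟨one_lt_two, by norm_num⟩)
    (Filter.Eventually.of_forall fun ω => by positivity)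
    (Filter.Eventually.of_forall fun ω =>
      Set.indicator_nonneg (fun _ _ => zero_le_one) ω)
    memf memg
  have hr1 : ∫ ω, ((X ω - X' ω) ^ 2) ^ (2:ℝ) ∂μ = 2 * m4 + 6 := by
    rw [← EY4]
    refine integral_congr_ae (Filter.Eventually.of_forall fun ω => ?_)
    show ((X ω - X' ω) ^ 2) ^ (2:ℝ) = (X ω - X' ω) ^ 4
    rw [show (2:ℝ) = ((2:ℕ):ℝ) by norm_num, Real.rpow_natCast]
    ring
  have hr2 : ∫ ω, (A.indicator (fun _ => (1:ℝ)) ω) ^ (2:ℝ) ∂μ = (μ A).toReal := by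
    have hb : ∀ ω, (A.indicator (fun _ => (1:ℝ)) ω) ^ (2:ℝ)
        = A.indicator (fun _ => (1:ℝ)) ω := by
      intro ω
      rw [Set.indicator_apply]
      split_ifs
      · exact Real.one_rpow _
      · exact Real.zero_rpow (by norm_num)
    rw [integral_congr_ae (Filter.Eventually.of_forall hb)]
    simpa [measureReal_def] using integral_indicator_const (1:ℝ) mA
  rw [hr1, hr2] at holder
  set a : ℝ := (μ A).toReal with hadef
  have ha0 : 0 ≤ a := ENNReal.toReal_nonneg
  have hM0 : (0:ℝ) ≤ 2 * m4 + 6 := by linarith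
  have hCS : (109:ℝ)/128 ≤ Real.sqrt ((2 * m4 + 6) * a) := by
    rw [Real.sqrt_mul hM0, Real.sqrt_eq_rpow, Real.sqrt_eq_rpow]
    calc (109:ℝ)/128 ≤ ∫ ω, A.indicator (fun ω => (X ω - X' ω) ^ 2) ω ∂μ := hmid
      _ = ∫ ω, (X ω - X' ω) ^ 2 * A.indicator (fun _ => (1:ℝ)) ω ∂μ := haind
      _ ≤ _ := holder
  have hsq : ((109:ℝ)/128) ^ 2 ≤ (2 * m4 + 6) * a := by
    have h2 : ((109:ℝ)/128) ^ 2 ≤ (Real.sqrt ((2 * m4 + 6) * a)) ^ 2 :=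
      pow_le_pow_left₀ (by norm_num) hCS 2
    rwa [Real.sq_sqrt (mul_nonneg hM0 ha0)] at h2
  have hMle : 2 * m4 + 6 ≤ 38 * B ^ 4 := by nlinarith
  rw [div_le_iff₀ (by positivity : (0:ℝ) < 2 ^ 7 * B ^ 4)]
  nlinarith [mul_nonneg ha0 (sub_nonneg.mpr hMle), hsq]
end

section
/- (Tensorization) Let ζ₁, …, ζ_n be independent non-negative real random variables and K, ε₀ ≥ 0 constants such that ℙ(ζ_k ≤ ε) ≤ Kε for every ε ≥ ε₀ and every k. Then there is a universal constant C > 0 such that for all ε > ε₀, ℙ(∑_{k=1}^n ζ_k² ≤ ε² n) ≤ (C K ε)^n. -/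
open MeasureTheory ProbabilityTheory Real

lemma aux_pt_bound {Ω : Type} [MeasurableSpace Ω] (ζ : Ω → ℝ) (hnn : ∀ ω, 0 ≤ ζ ω)
    {ε : ℝ} (hεpos : 0 < ε) (ω : Ω) :
    ENNReal.ofReal (Real.exp (-(ε ^ 2)⁻¹ * ζ ω ^ 2)) ≤
      ∑' j : ℕ, ({ω' | ζ ω' ≤ ε * Real.sqrt (j + 1)}.indicator
        (fun _ => ENNReal.ofReal (Real.exp (-(j : ℝ)))) ω) := by
  set x := ζ ω with hx
  set j : ℕ := ⌊x ^ 2 / ε ^ 2⌋₊ with hj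
  refine le_trans ?_ (ENNReal.le_tsum j)
  have hε2 : (0:ℝ) < ε ^ 2 := by positivity
  have hmem : ω ∈ {ω' | ζ ω' ≤ ε * Real.sqrt (j + 1)} := by
    have h1 : x ^ 2 / ε ^ 2 < (j : ℝ) + 1 := Nat.lt_floor_add_one _
    have h2 : x ^ 2 ≤ ε ^ 2 * ((j : ℝ) + 1) := by
      rw [div_lt_iff₀ hε2] at h1
      nlinarith [h1]
    have h3 : Real.sqrt (x ^ 2) ≤ Real.sqrt (ε ^ 2 * ((j : ℝ) + 1)) := Real.sqrt_le_sqrt h2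
    rwa [Real.sqrt_sq (hnn ω), Real.sqrt_mul (le_of_lt hε2), Real.sqrt_sq hεpos.le] at h3
  rw [Set.indicator_of_mem hmem]
  apply ENNReal.ofReal_le_ofReal
  apply Real.exp_le_exp.mpr
  have h4 : (j : ℝ) ≤ x ^ 2 / ε ^ 2 := Nat.floor_le (by positivity)
  have h5 : -(ε ^ 2)⁻¹ * x ^ 2 = -(x ^ 2 / ε ^ 2) := by field_simp
  rw [h5]
  linarith

lemma aux_mgf_le {Ω : Type} [MeasurableSpace Ω] (μ : Measure Ω) [IsProbabilityMeasure μ]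
    (ζ : Ω → ℝ) (hm : Measurable ζ) (hnn : ∀ ω, 0 ≤ ζ ω)
    (K ε₀ ε : ℝ) (hK : 0 ≤ K) (hε₀ : 0 ≤ ε₀)
    (htail : ∀ s : ℝ, ε₀ ≤ s → (μ {ω | ζ ω ≤ s}).toReal ≤ K * s)
    (hε : ε₀ < ε) :
    mgf (fun ω => ζ ω ^ 2) μ (-(ε ^ 2)⁻¹) ≤ 20 * (K * ε) := by
  have hεpos : 0 < ε := lt_of_le_of_lt hε₀ hε
  set t : ℝ := -(ε ^ 2)⁻¹ with ht
  have hmeas : Measurable fun ω => Real.exp (t * ζ ω ^ 2) :=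
    ((hm.pow_const 2).const_mul t).exp
  have hmgf : mgf (fun ω => ζ ω ^ 2) μ t =
      (∫⁻ ω, ENNReal.ofReal (Real.exp (t * ζ ω ^ 2)) ∂μ).toReal := by
    rw [mgf]
    exact integral_eq_lintegral_of_nonneg_ae (ae_of_all _ fun ω => (Real.exp_pos _).le)
      hmeas.aestronglyMeasurable
  rw [hmgf]
  apply ENNReal.toReal_le_of_le_ofReal (by positivity)
  have he2 : (2:ℝ) / Real.exp 1 < 1 := by
    rw [div_lt_one (Real.exp_pos 1)]
    have := Real.exp_one_gt_d9
    linarith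
  have he2' : (0:ℝ) ≤ 2 / Real.exp 1 := by positivity
  -- termwise bound on the indicator integrals
  have hterm : ∀ j : ℕ,
      (∫⁻ ω, ({ω' | ζ ω' ≤ ε * Real.sqrt (j + 1)}.indicator
        (fun _ => ENNReal.ofReal (Real.exp (-(j : ℝ)))) ω) ∂μ) ≤
      ENNReal.ofReal (K * ε * (2 * (2 / Real.exp 1) ^ j)) := by
    intro j
    have hS : MeasurableSet {ω' | ζ ω' ≤ ε * Real.sqrt (j + 1)} :=
      hm measurableSet_Iic
    rw [lintegral_indicator_const hS]
    have hsq1 : (1:ℝ) ≤ Real.sqrt (j + 1) := by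
      rw [Real.one_le_sqrt]; push_cast; linarith [Nat.cast_nonneg (α := ℝ) j]
    have hs : ε₀ ≤ ε * Real.sqrt (j + 1) := by nlinarith
    have hμS : μ {ω' | ζ ω' ≤ ε * Real.sqrt (j + 1)} ≤
        ENNReal.ofReal (K * (ε * Real.sqrt (j + 1))) := by
      rw [ENNReal.le_ofReal_iff_toReal_le (measure_ne_top μ _) (by positivity)]
      exact htail _ hs
    calc ENNReal.ofReal (Real.exp (-(j : ℝ))) * μ {ω' | ζ ω' ≤ ε * Real.sqrt (j + 1)}
        ≤ ENNReal.ofReal (Real.exp (-(j : ℝ))) *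
            ENNReal.ofReal (K * (ε * Real.sqrt (j + 1))) := by gcongr
      _ = ENNReal.ofReal (Real.exp (-(j : ℝ)) * (K * (ε * Real.sqrt (j + 1)))) := by
            rw [ENNReal.ofReal_mul (Real.exp_pos _).le]
      _ ≤ ENNReal.ofReal (K * ε * (2 * (2 / Real.exp 1) ^ j)) := by
            apply ENNReal.ofReal_le_ofReal
            have hsq2 : Real.sqrt ((j:ℝ) + 1) ≤ (j:ℝ) + 1 := by
              nlinarith [Real.sq_sqrt (show (0:ℝ) ≤ (j:ℝ) + 1 by positivity),
                Real.sqrt_nonneg ((j:ℝ) + 1)]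
            have h2p : ((j:ℝ) + 1) ≤ 2 * 2 ^ j := by
              have h0 := Nat.lt_two_pow_self (n := j)
              have h0' : (j:ℝ) < 2 ^ j := by exact_mod_cast h0
              have h1' : (1:ℝ) ≤ 2 ^ j := one_le_pow₀ (by norm_num)
              linarith
            have hkey : Real.exp (-(j : ℝ)) * Real.sqrt ((j:ℝ) + 1) ≤ 2 * (2 / Real.exp 1) ^ j := by
              have hid : (2 / Real.exp 1) ^ j = Real.exp (-(j : ℝ)) * 2 ^ j := by
                rw [div_pow, Real.exp_one_pow, Real.exp_neg]
                ring
              rw [hid]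
              have hexp : (0:ℝ) < Real.exp (-(j : ℝ)) := Real.exp_pos _
              calc Real.exp (-(j : ℝ)) * Real.sqrt ((j:ℝ) + 1)
                  ≤ Real.exp (-(j : ℝ)) * ((j:ℝ) + 1) := by nlinarith
                _ ≤ Real.exp (-(j : ℝ)) * (2 * 2 ^ j) := by nlinarith
                _ = 2 * (Real.exp (-(j : ℝ)) * 2 ^ j) := by ring
            calc Real.exp (-(j : ℝ)) * (K * (ε * Real.sqrt ((j:ℝ) + 1)))
                = (K * ε) * (Real.exp (-(j : ℝ)) * Real.sqrt ((j:ℝ) + 1)) := by push_cast; ring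
              _ ≤ (K * ε) * (2 * (2 / Real.exp 1) ^ j) := by
                  apply mul_le_mul_of_nonneg_left _ (by positivity)
                  convert hkey using 2 <;> push_cast <;> ring
              _ = K * ε * (2 * (2 / Real.exp 1) ^ j) := by ring
  calc ∫⁻ ω, ENNReal.ofReal (Real.exp (t * ζ ω ^ 2)) ∂μ
      ≤ ∫⁻ ω, ∑' j : ℕ, ({ω' | ζ ω' ≤ ε * Real.sqrt (j + 1)}.indicator
          (fun _ => ENNReal.ofReal (Real.exp (-(j : ℝ)))) ω) ∂μ :=
        lintegral_mono (fun ω => aux_pt_bound ζ hnn hεpos ω)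
    _ = ∑' j : ℕ, ∫⁻ ω, ({ω' | ζ ω' ≤ ε * Real.sqrt (j + 1)}.indicator
          (fun _ => ENNReal.ofReal (Real.exp (-(j : ℝ)))) ω) ∂μ :=
        lintegral_tsum (fun j =>
          (measurable_const.indicator (hm measurableSet_Iic)).aemeasurable)
    _ ≤ ∑' j : ℕ, ENNReal.ofReal (K * ε * (2 * (2 / Real.exp 1) ^ j)) :=
        ENNReal.tsum_le_tsum hterm
    _ = ENNReal.ofReal (∑' j : ℕ, K * ε * (2 * (2 / Real.exp 1) ^ j)) := by
        rw [ENNReal.ofReal_tsum_of_nonneg (fun j => by positivity)]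
        exact (Summable.mul_left _ ((summable_geometric_of_lt_one he2' he2).mul_left 2))
    _ ≤ ENNReal.ofReal (20 * (K * ε)) := by
        apply ENNReal.ofReal_le_ofReal
        rw [tsum_mul_left, tsum_mul_left, tsum_geometric_of_lt_one he2' he2]
        have hlt : 2 / Real.exp 1 < 3 / 4 := by
          rw [div_lt_iff₀ (Real.exp_pos 1)]
          nlinarith [Real.exp_one_gt_d9]
        have h1 : (1 - 2 / Real.exp 1)⁻¹ ≤ 4 := by
          rw [inv_le_comm₀ (by linarith) (by norm_num)]
          linarith
        have h2 : (0:ℝ) < (1 - 2 / Real.exp 1)⁻¹ := by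
          apply inv_pos.mpr; linarith
        nlinarith [h1, h2, mul_nonneg hK hεpos.le]

/-- Tensorization: there is a universal constant `C > 0` so that if `ζ₁, …, ζ_n` are
independent nonnegative random variables with `ℙ(ζ_k ≤ ε) ≤ Kε` for all `ε ≥ ε₀`, then
`ℙ(∑ ζ_k² ≤ ε²n) ≤ (CKε)^n` for all `ε > ε₀`. -/
theorem stmt_8 :
    ∃ C : ℝ, 0 < C ∧
      ∀ (n : ℕ) (Ω : Type) (mΩ : MeasurableSpace Ω) (μ : Measure Ω),
        IsProbabilityMeasure μ →
        ∀ (ζ : Fin n → Ω → ℝ), (∀ k, Measurable (ζ k)) →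
        iIndepFun ζ μ →
        (∀ k ω, 0 ≤ ζ k ω) →
        ∀ (K ε₀ : ℝ), 0 ≤ K → 0 ≤ ε₀ →
        (∀ k, ∀ ε : ℝ, ε₀ ≤ ε → (μ {ω | ζ k ω ≤ ε}).toReal ≤ K * ε) →
        ∀ ε : ℝ, ε₀ < ε →
          (μ {ω | ∑ k, ζ k ω ^ 2 ≤ ε ^ 2 * n}).toReal ≤ (C * K * ε) ^ n := by
  refine ⟨100, by norm_num, ?_⟩
  intro n Ω mΩ μ hprob ζ hmeas hindep hnn K ε₀ hK hε₀ htail ε hε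
  have hεpos : 0 < ε := lt_of_le_of_lt hε₀ hε
  set t : ℝ := -(ε ^ 2)⁻¹ with ht
  have htle : t ≤ 0 := neg_nonpos.mpr (inv_nonneg.mpr (sq_nonneg ε))
  set Y : Fin n → Ω → ℝ := fun i ω => ζ i ω ^ 2 with hY
  have hYm : ∀ i, Measurable (Y i) := fun i => (hmeas i).pow_const 2
  have hYindep : iIndepFun Y μ :=
    hindep.comp (fun _ x => x ^ 2) (fun _ => measurable_id.pow_const 2)
  have h_int : ∀ i : Fin n, Integrable (fun ω => Real.exp (t * Y i ω)) μ := by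
    intro i
    refine (integrable_const (1:ℝ)).mono' (((hYm i).const_mul t).exp.aestronglyMeasurable) ?_
    filter_upwards with ω
    rw [Real.norm_eq_abs, abs_of_pos (Real.exp_pos _)]
    exact Real.exp_le_one_iff.mpr (mul_nonpos_of_nonpos_of_nonneg htle (sq_nonneg _))
  have h_int_sum : Integrable (fun ω => Real.exp (t * (∑ i, Y i) ω)) μ :=
    hYindep.integrable_exp_mul_sum hYm (fun i _ => h_int i)
  have hset : {ω | ∑ k, ζ k ω ^ 2 ≤ ε ^ 2 * n} = {ω | (∑ i, Y i) ω ≤ ε ^ 2 * n} := by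
    ext ω; simp [hY, Finset.sum_apply]
  have hch := measure_le_le_exp_mul_mgf (X := ∑ i, Y i) (μ := μ) (t := t)
    (ε ^ 2 * n) htle h_int_sum
  rw [hset]
  have hexp : Real.exp (-t * (ε ^ 2 * n)) = Real.exp 1 ^ n := by
    rw [Real.exp_one_pow]
    congr 1
    have hne : (ε:ℝ) ≠ 0 := hεpos.ne'
    rw [ht]
    field_simp
  have hmgf : mgf (∑ i, Y i) μ t = ∏ i, mgf (Y i) μ t := hYindep.mgf_sum hYm Finset.univ
  have hfac : ∀ i : Fin n, mgf (Y i) μ t ≤ 20 * (K * ε) := fun i =>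
    aux_mgf_le μ (ζ i) (hmeas i) (hnn i) K ε₀ ε hK hε₀ (htail i) hε
  have hprod : ∏ i, mgf (Y i) μ t ≤ (20 * (K * ε)) ^ n := by
    calc ∏ i, mgf (Y i) μ t ≤ ∏ _i : Fin n, (20 * (K * ε)) :=
          Finset.prod_le_prod (fun i _ => mgf_nonneg) (fun i _ => hfac i)
      _ = (20 * (K * ε)) ^ n := by
          rw [Finset.prod_const, Finset.card_univ, Fintype.card_fin]
  calc (μ {ω | (∑ i, Y i) ω ≤ ε ^ 2 * n}).toReal
      ≤ Real.exp (-t * (ε ^ 2 * n)) * mgf (∑ i, Y i) μ t := hch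
    _ ≤ Real.exp 1 ^ n * (20 * (K * ε)) ^ n := by
        rw [hexp, hmgf]
        exact mul_le_mul_of_nonneg_left hprod (by positivity)
    _ = (Real.exp 1 * (20 * (K * ε))) ^ n := by ring
    _ ≤ (100 * K * ε) ^ n := by
        apply pow_le_pow_left₀ (by positivity)
        nlinarith [Real.exp_one_lt_d9, mul_nonneg hK hεpos.le]
end

section
/- Let a = (a₁, …, a_n) with a_k = (c_k, d_k)ᵀ ∈ ℝ², where c = (c₁,…,c_n) has ‖c‖₂ = 1, d = (d₁,…,d_n) has ‖d‖₂ = ω_n ∈ (0,1], and |⟨c, d/‖d‖⟩| ≤ 0.01. Suppose two vectors θ', θ'' ∈ ℝ² and integers p', p'' ∈ ℤ² satisfy ‖(z/ε) θ'·a − p'‖₂ ≤ t and ‖(z/ε) θ''·a − p''‖₂ ≤ t for some z ≥ 1, ε > 0, t > 0. If the essential LCD condition D_{α,γ}(a) > √2/ε fails for neither difference, i.e. writing τ = (z/ε)(θ'−θ''), either ‖τ‖₂ ≥ √2/ε or ‖τ·a − (p'−p'')‖₂ ≥ γ‖τ·a‖₂, then in the second case: τ₁² + ω_n² τ₂² ≤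 8t²/γ². (Here τ·a = (⟨τ, a₁⟩, …, ⟨τ, a_n⟩) ∈ ℝⁿ.) -/
set_option maxHeartbeats 1000000 in
/-- Key volumetric computation in the two-dimensional Littlewood–Offord theorem: with
`a_k = (c_k, d_k)`, `‖c‖ = 1`, `‖d‖ = ω ∈ (0,1]`, `|⟨c, d/‖d‖⟩| ≤ 0.01`, if `θ', θ''` admit
lattice approximations `‖(z/ε)θ'·a − p'‖ ≤ t`, `‖(z/ε)θ''·a − p''‖ ≤ t`, and for
`τ = (z/ε)(θ'−θ'')` the second LCD alternative `‖τ·a − (p'−p'')‖ ≥ γ‖τ·a‖` holds, then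
`τ₁² + ω²τ₂² ≤ 8t²/γ²`. -/
theorem stmt_12 (n : ℕ) (c d : Fin n → ℝ) (ω : ℝ) (hω : 0 < ω) (hω1 : ω ≤ 1)
    (hc : ∑ k, c k ^ 2 = 1) (hd : ∑ k, d k ^ 2 = ω ^ 2)
    (hortho : |∑ k, c k * d k| ≤ 0.01 * ω)
    (z ε t γ : ℝ) (hz : 1 ≤ z) (hε : 0 < ε) (ht : 0 < t) (hγ : 0 < γ) (hγ1 : γ ≤ 1)
    (θ'₁ θ'₂ θ''₁ θ''₂ : ℝ) (p' p'' : Fin n → ℤ)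
    (h1 : Real.sqrt (∑ k, (z / ε * (θ'₁ * c k + θ'₂ * d k) - (p' k : ℝ)) ^ 2) ≤ t)
    (h2 : Real.sqrt (∑ k, (z / ε * (θ''₁ * c k + θ''₂ * d k) - (p'' k : ℝ)) ^ 2) ≤ t)
    (hcase : γ * Real.sqrt (∑ k,
        (z / ε * ((θ'₁ - θ''₁) * c k + (θ'₂ - θ''₂) * d k)) ^ 2) ≤
      Real.sqrt (∑ k,
        (z / ε * ((θ'₁ - θ''₁) * c k + (θ'₂ - θ''₂) * d k)
          - ((p' k : ℝ) - (p'' k : ℝ))) ^ 2)) :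
    (z / ε * (θ'₁ - θ''₁)) ^ 2 + ω ^ 2 * (z / ε * (θ'₂ - θ''₂)) ^ 2
      ≤ 8 * t ^ 2 / γ ^ 2 := by
  set τ₁ := z / ε * (θ'₁ - θ''₁) with hτ₁
  set τ₂ := z / ε * (θ'₂ - θ''₂) with hτ₂
  set Q := τ₁ ^ 2 + ω ^ 2 * τ₂ ^ 2 with hQ
  -- S = ∑ (τ₁ c + τ₂ d)^2
  set S := ∑ k, (τ₁ * c k + τ₂ * d k) ^ 2 with hS
  have hS0 : 0 ≤ S := Finset.sum_nonneg fun k _ => sq_nonneg _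
  have hexp : S = Q + 2 * τ₁ * τ₂ * ∑ k, c k * d k := by
    have : S = τ₁ ^ 2 * (∑ k, c k ^ 2) + τ₂ ^ 2 * (∑ k, d k ^ 2)
        + 2 * τ₁ * τ₂ * ∑ k, c k * d k := by
      rw [Finset.mul_sum, Finset.mul_sum, Finset.mul_sum, ← Finset.sum_add_distrib,
        ← Finset.sum_add_distrib]
      exact Finset.sum_congr rfl fun k _ => by ring
    rw [this, hc, hd, hQ]; ring
  have hcross : |2 * τ₁ * τ₂ * ∑ k, c k * d k| ≤ 0.01 * Q := by
    have h2 : 2 * |τ₁| * (ω * |τ₂|) ≤ τ₁ ^ 2 + (ω * τ₂) ^ 2 := by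
      nlinarith [sq_nonneg (|τ₁| - ω * |τ₂|), sq_abs τ₁, sq_abs τ₂, abs_nonneg τ₁, abs_nonneg τ₂, hω.le]
    calc |2 * τ₁ * τ₂ * ∑ k, c k * d k| = 2 * |τ₁| * |τ₂| * |∑ k, c k * d k| := by
          rw [abs_mul, abs_mul, abs_mul, abs_two]
      _ ≤ 2 * |τ₁| * |τ₂| * (0.01 * ω) := by
          apply mul_le_mul_of_nonneg_left hortho
          positivity
      _ = 0.01 * (2 * |τ₁| * (ω * |τ₂|)) := by ring
      _ ≤ 0.01 * (τ₁ ^ 2 + (ω * τ₂) ^ 2) := by linarith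
      _ = 0.01 * Q := by rw [hQ]; ring
  have hQS : Q / 2 ≤ S := by
    have := abs_le.1 hcross
    have hQ0 : 0 ≤ Q := by positivity
    nlinarith
  -- triangle inequality: RHS of hcase ≤ 2t
  have htri : Real.sqrt (∑ k,
        (z / ε * ((θ'₁ - θ''₁) * c k + (θ'₂ - θ''₂) * d k)
          - ((p' k : ℝ) - (p'' k : ℝ))) ^ 2) ≤ 2 * t := by
    set U : EuclideanSpace ℝ (Fin n) := WithLp.toLp 2 (fun k => z / ε * (θ'₁ * c k + θ'₂ * d k) - (p' k : ℝ))
    set V : EuclideanSpace ℝ (Fin n) := WithLp.toLp 2 (fun k => z / ε * (θ''₁ * c k + θ''₂ * d k) - (p'' k : ℝ))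
    have hnorm : ∀ (W : EuclideanSpace ℝ (Fin n)), ‖W‖ = Real.sqrt (∑ k, W k ^ 2) := by
      intro W
      rw [EuclideanSpace.norm_eq]
      congr 1
      exact Finset.sum_congr rfl fun k _ => by rw [Real.norm_eq_abs, sq_abs]
    have heq : ∀ k, z / ε * ((θ'₁ - θ''₁) * c k + (θ'₂ - θ''₂) * d k)
        - ((p' k : ℝ) - (p'' k : ℝ)) = (U - V) k := by
      intro k
      simp only [U, V, PiLp.sub_apply, PiLp.toLp_apply]
      ring
    calc Real.sqrt (∑ k, (z / ε * ((θ'₁ - θ''₁) * c k + (θ'₂ - θ''₂) * d k)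
          - ((p' k : ℝ) - (p'' k : ℝ))) ^ 2)
        = ‖U - V‖ := by rw [hnorm]; congr 1; exact Finset.sum_congr rfl fun k _ => by rw [heq]
      _ ≤ ‖U‖ + ‖V‖ := norm_sub_le U V
      _ ≤ 2 * t := by rw [hnorm, hnorm]; have := h1; have := h2; linarith [h1, h2]
  have hlhs : γ * Real.sqrt S ≤ 2 * t := by
    refine le_trans ?_ htri
    refine le_trans (le_of_eq ?_) hcase
    congr 2
    exact Finset.sum_congr rfl fun k _ => by rw [hτ₁, hτ₂]; ring
  clear_value S
  have hsq : γ ^ 2 * S ≤ 4 * t ^ 2 := by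
    have h := mul_self_le_mul_self (mul_nonneg hγ.le (Real.sqrt_nonneg S)) hlhs
    calc γ ^ 2 * S = (γ * Real.sqrt S) * (γ * Real.sqrt S) := by
          rw [show (γ * Real.sqrt S) * (γ * Real.sqrt S)
              = γ ^ 2 * (Real.sqrt S * Real.sqrt S) by ring, Real.mul_self_sqrt hS0]
      _ ≤ (2 * t) * (2 * t) := h
      _ = 4 * t ^ 2 := by ring
  rw [hQ] at hQS
  clear_value τ₁ τ₂
  rw [le_div_iff₀ (by positivity : (0:ℝ) < γ ^ 2)]
  nlinarith [mul_le_mul_of_nonneg_left hQS (sq_nonneg γ)]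
end

section
/- Let S be an ℝ²-valued random variable with characteristic function factorizing as ∏_{k=1}^n φ(⟨θ, a_k⟩/ε) for θ ∈ ℝ², where φ is a real characteristic function satisfying |φ(s)| ≤ exp(−8p f²(s)) with f(θ) := min_{p ∈ ℤⁿ} ‖(z/ε)θ·a − p‖₂. Suppose Vol({θ ∈ B(0,√2) : f(θ) ≤ t}) ≤ ω^{−1}(Ctε/γ)² for all t < √(αn)/2 with constants ω ∈ (0,1], C, γ, ε, α > 0. Then ∫_{B(0,√2)} exp(−8p f²(θ)) dθ ≤ ω^{−1}(C'ε/(γ√p))² + C' exp(−2pαn) for a universal constant C' > 0. -/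
open MeasureTheory

set_option maxHeartbeats 1000000

/-- Layer-cake integration step in the two-dimensional Littlewood–Offord theorem: if the
sublevel sets of `f` in the ball `B(0,√2) ⊆ ℝ²` satisfy
`Vol({f ≤ t}) ≤ ω⁻¹(Ctε/γ)²` for all `0 ≤ t < √(αn)/2`, then
`∫_{B(0,√2)} exp(−8pf²) ≤ ω⁻¹(C'ε/(γ√p))² + C'·exp(−2pαn)`
for a constant `C' > 0` depending only on `C`. -/
theorem stmt_16 (C : ℝ) (hC : 0 < C) :
    ∃ C' : ℝ, 0 < C' ∧
      ∀ (f : EuclideanSpace ℝ (Fin 2) → ℝ), Measurable f → (∀ θ, 0 ≤ f θ) →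
      ∀ (ω γ ε α p : ℝ) (n : ℕ), 0 < ω → ω ≤ 1 → 0 < γ → 0 < ε → 0 < α → 0 < p →
      (∀ t : ℝ, 0 ≤ t → t < Real.sqrt (α * n) / 2 →
        (volume {θ ∈ Metric.ball (0 : EuclideanSpace ℝ (Fin 2)) (Real.sqrt 2) |
            f θ ≤ t}).toReal ≤ ω⁻¹ * (C * t * ε / γ) ^ 2) →
      (∫ θ in Metric.ball (0 : EuclideanSpace ℝ (Fin 2)) (Real.sqrt 2),
          Real.exp (-(8 * p * f θ ^ 2))) ≤
        ω⁻¹ * (C' * ε / (γ * Real.sqrt p)) ^ 2 + C' * Real.exp (-(2 * p * α * n)) := by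
  refine ⟨C + 8, by positivity, ?_⟩
  intro f hf hf0 ω γ ε α p n hω hω1 hγ hε hα hp hvol
  set B := Metric.ball (0 : EuclideanSpace ℝ (Fin 2)) (Real.sqrt 2) with hBdef
  set E := Real.exp (-(2 * p * α * n)) with hEdef
  have hE0 : 0 < E := Real.exp_pos _
  set A := ω⁻¹ * (C * ε / γ) ^ 2 / (8 * p) with hAdef
  have hA0 : 0 ≤ A := by positivity
  have hBmeas : MeasurableSet B := measurableSet_ball
  have hBfin : volume B < ⊤ := measure_ball_lt_top
  -- measurability of the integrand
  have hhm : Measurable fun θ => Real.exp (-(8 * p * f θ ^ 2)) := by fun_prop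
  -- the integrand is at most 1
  have hle1 : ∀ θ, Real.exp (-(8 * p * f θ ^ 2)) ≤ 1 := by
    intro θ
    rw [Real.exp_le_one_iff]
    nlinarith [sq_nonneg (f θ)]
  -- integrability
  have hint : Integrable (fun θ => Real.exp (-(8 * p * f θ ^ 2))) (volume.restrict B) := by
    have hc : IntegrableOn (fun _ : EuclideanSpace ℝ (Fin 2) => (1:ℝ)) B volume :=
      integrableOn_const hBfin.ne
    refine Integrable.mono' hc hhm.aestronglyMeasurable
      (Filter.Eventually.of_forall fun θ => ?_)
    rw [Real.norm_eq_abs, abs_of_pos (Real.exp_pos _)]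
    exact hle1 θ
  have hnn : 0 ≤ᵐ[volume.restrict B] fun θ => Real.exp (-(8 * p * f θ ^ 2)) :=
    Filter.Eventually.of_forall fun θ => (Real.exp_pos _).le
  have key := hint.integral_eq_integral_meas_lt hnn
  rw [key]
  -- the dominating function
  set g : ℝ → ℝ := (fun t => (Set.Ioo (0:ℝ) 1).indicator (fun t => 2 * A * t ^ (-(1:ℝ)/2)) t
      + (Set.Ioc (0:ℝ) E).indicator (fun _ => (8:ℝ)) t) with hgdef
  have hSm : ∀ t : ℝ, MeasurableSet {a : EuclideanSpace ℝ (Fin 2) |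
      t < Real.exp (-(8 * p * f a ^ 2))} := fun t =>
    measurableSet_lt measurable_const hhm
  -- pointwise bound
  have hbound : ∀ t ∈ Set.Ioi (0:ℝ),
      ((volume.restrict B) {a | t < Real.exp (-(8 * p * f a ^ 2))}).toReal ≤ g t := by
    intro t ht0
    rw [Set.mem_Ioi] at ht0
    have hind1nn : 0 ≤ (Set.Ioo (0:ℝ) 1).indicator (fun t => 2 * A * t ^ (-(1:ℝ)/2)) t :=
      Set.indicator_nonneg (fun s hs => mul_nonneg (by linarith) (Real.rpow_nonneg hs.1.le _)) t
    have hind2nn : 0 ≤ (Set.Ioc (0:ℝ) E).indicator (fun _ => (8:ℝ)) t :=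
      Set.indicator_nonneg (fun s hs => by norm_num) t
    rw [Measure.restrict_apply (hSm t)]
    rcases le_or_gt 1 t with ht1 | ht1
    · -- t ≥ 1 : the set is empty
      have : {a : EuclideanSpace ℝ (Fin 2) | t < Real.exp (-(8 * p * f a ^ 2))} ∩ B = ∅ := by
        ext a
        simp only [Set.mem_inter_iff, Set.mem_setOf_eq, Set.mem_empty_iff_false, iff_false,
          not_and]
        intro ha
        exact absurd ha (not_lt.mpr ((hle1 a).trans ht1))
      rw [this, measure_empty]
      simpa using add_nonneg hind1nn hind2nn
    · -- 0 < t < 1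
      set L := -Real.log t with hLdef
      have hL0 : 0 < L := by
        have := Real.log_neg ht0 ht1
        simp only [hLdef]; linarith
      set u := Real.sqrt (L / (8 * p)) with hudef
      have hu0 : 0 ≤ u := Real.sqrt_nonneg _
      have husq : u ^ 2 = L / (8 * p) := Real.sq_sqrt (by positivity)
      have hsubset : {a : EuclideanSpace ℝ (Fin 2) | t < Real.exp (-(8 * p * f a ^ 2))} ∩ B
          ⊆ {θ ∈ B | f θ ≤ u} := by
        rintro a ⟨ha, haB⟩
        refine ⟨haB, ?_⟩
        rw [Set.mem_setOf_eq] at ha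
        have hlog : Real.log t < -(8 * p * f a ^ 2) := (Real.log_lt_iff_lt_exp ht0).mpr ha
        have hfa2 : f a ^ 2 ≤ L / (8 * p) := by
          rw [le_div_iff₀ (by positivity)]
          nlinarith
        exact (Real.le_sqrt (hf0 a) (by positivity)).mpr hfa2
      have hmono : (volume ({a : EuclideanSpace ℝ (Fin 2) |
            t < Real.exp (-(8 * p * f a ^ 2))} ∩ B)).toReal
          ≤ (volume {θ ∈ B | f θ ≤ u}).toReal := by
        refine ENNReal.toReal_mono ?_ (measure_mono hsubset)
        exact ((measure_mono (fun a ha => ha.1)).trans_lt hBfin).ne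
      rcases lt_or_ge u (Real.sqrt (α * n) / 2) with hu | hu
      · -- small u : use the sublevel-set hypothesis
        have hb := hvol u hu0 hu
        have heq : ω⁻¹ * (C * u * ε / γ) ^ 2 = A * L := by
          have : (C * u * ε / γ) ^ 2 = (C * ε / γ) ^ 2 * (L / (8 * p)) := by
            rw [← husq]; ring
          rw [this, hAdef]; ring
        have hlogle : L ≤ 2 * t ^ (-(1:ℝ)/2) := by
          have hst : 0 < Real.sqrt t := Real.sqrt_pos.mpr ht0
          have h2 : Real.log (1 / Real.sqrt t) ≤ 1 / Real.sqrt t - 1 :=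
            Real.log_le_sub_one_of_pos (by positivity)
          have h3 : Real.log (1 / Real.sqrt t) = -(Real.log t / 2) := by
            rw [one_div, Real.log_inv, Real.log_sqrt ht0.le]
          have h4 : t ^ (-(1:ℝ)/2) = 1 / Real.sqrt t := by
            rw [Real.sqrt_eq_rpow, one_div, ← Real.rpow_neg ht0.le]
            norm_num
          rw [h4, hLdef]
          linarith [h3 ▸ h2]
        have hAL : A * L ≤ 2 * A * t ^ (-(1:ℝ)/2) := by
          calc A * L ≤ A * (2 * t ^ (-(1:ℝ)/2)) := by
                exact mul_le_mul_of_nonneg_left hlogle hA0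
            _ = 2 * A * t ^ (-(1:ℝ)/2) := by ring
        have hind1 : (Set.Ioo (0:ℝ) 1).indicator (fun t => 2 * A * t ^ (-(1:ℝ)/2)) t
            = 2 * A * t ^ (-(1:ℝ)/2) := Set.indicator_of_mem (Set.mem_Ioo.mpr ⟨ht0, ht1⟩) _
        calc (volume ({a : EuclideanSpace ℝ (Fin 2) |
              t < Real.exp (-(8 * p * f a ^ 2))} ∩ B)).toReal
            ≤ (volume {θ ∈ B | f θ ≤ u}).toReal := hmono
          _ ≤ ω⁻¹ * (C * u * ε / γ) ^ 2 := hb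
          _ = A * L := heq
          _ ≤ 2 * A * t ^ (-(1:ℝ)/2) := hAL
          _ ≤ g t := by rw [hgdef]; simp only [hind1]; linarith
      · -- large u : t ≤ E, use the full volume of the ball
        have htE : t ≤ E := by
          have hT2 : (Real.sqrt (α * n) / 2) ^ 2 ≤ u ^ 2 := by
            have := Real.sqrt_nonneg (α * n)
            nlinarith
          have hsq : (Real.sqrt (α * n) / 2) ^ 2 = α * n / 4 := by
            rw [div_pow, Real.sq_sqrt (by positivity)]
            norm_num
          rw [hsq, husq] at hT2
          have hLge : 2 * p * α * n ≤ L := by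
            rw [div_le_div_iff₀ (by norm_num) (by positivity)] at hT2
            nlinarith
          have : Real.log t ≤ -(2 * p * α * n) := by
            rw [hLdef] at hLge; linarith
          rw [hEdef]
          exact (Real.log_le_iff_le_exp ht0).mp this
        have hvolB : (volume B).toReal ≤ 8 := by
          rw [hBdef, EuclideanSpace.volume_ball]
          rw [show (Fintype.card (Fin 2)) = 2 from Fintype.card_fin 2]
          rw [show ((2:ℕ):ℝ) / 2 + 1 = 2 by norm_num, Real.Gamma_two]
          rw [show Real.sqrt Real.pi ^ 2 / 1 = Real.pi by
            rw [Real.sq_sqrt Real.pi_pos.le, div_one]]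
          rw [show (ENNReal.ofReal (Real.sqrt 2)) ^ 2
              = ENNReal.ofReal 2 from by
            rw [sq, ← ENNReal.ofReal_mul (Real.sqrt_nonneg 2),
              Real.mul_self_sqrt (by norm_num)]]
          rw [← ENNReal.ofReal_mul (by norm_num)]
          rw [ENNReal.toReal_ofReal (by positivity)]
          nlinarith [Real.pi_le_four]
        have hmem : t ∈ Set.Ioc (0:ℝ) E := ⟨ht0, htE⟩
        have hind2 : (Set.Ioc (0:ℝ) E).indicator (fun _ => (8:ℝ)) t = 8 :=
          Set.indicator_of_mem (Set.mem_Ioc.mpr hmem) _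
        calc (volume ({a : EuclideanSpace ℝ (Fin 2) |
              t < Real.exp (-(8 * p * f a ^ 2))} ∩ B)).toReal
            ≤ (volume B).toReal :=
              ENNReal.toReal_mono hBfin.ne (measure_mono fun a ha => ha.2)
          _ ≤ 8 := hvolB
          _ ≤ g t := by rw [hgdef]; simp only [hind2]; linarith
  -- integrability of g
  have hint1 : IntegrableOn (fun t : ℝ => 2 * A * t ^ (-(1:ℝ)/2)) (Set.Ioo (0:ℝ) 1) volume := by
    have h1 : IntervalIntegrable (fun x : ℝ => x ^ (-(1:ℝ)/2)) volume 0 1 :=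
      intervalIntegral.intervalIntegrable_rpow' (by norm_num)
    rw [intervalIntegrable_iff_integrableOn_Ioc_of_le (by norm_num)] at h1
    exact ((h1.mono_set Set.Ioo_subset_Ioc_self).const_mul (2 * A))
  have hg1 : Integrable ((Set.Ioo (0:ℝ) 1).indicator (fun t => 2 * A * t ^ (-(1:ℝ)/2)))
      volume := hint1.integrable_indicator measurableSet_Ioo
  have hg2 : Integrable ((Set.Ioc (0:ℝ) E).indicator (fun _ => (8:ℝ))) volume :=
    (integrableOn_const measure_Ioc_lt_top.ne).integrable_indicator
      measurableSet_Ioc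
  have hgint : Integrable g (volume.restrict (Set.Ioi (0:ℝ))) :=
    (hg1.integrableOn).add (hg2.integrableOn)
  -- the integral comparison
  have hcomp : (∫ t in Set.Ioi (0:ℝ),
      ((volume.restrict B) {a | t < Real.exp (-(8 * p * f a ^ 2))}).toReal)
      ≤ ∫ t in Set.Ioi (0:ℝ), g t := by
    refine integral_mono_of_nonneg (Filter.Eventually.of_forall fun t => ENNReal.toReal_nonneg)
      hgint ?_
    rw [Filter.EventuallyLE, ae_restrict_iff' measurableSet_Ioi]
    exact Filter.Eventually.of_forall hbound
  refine hcomp.trans ?_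
  -- compute the integral of g
  have hI1 : (∫ t in Set.Ioi (0:ℝ),
      (Set.Ioo (0:ℝ) 1).indicator (fun t => 2 * A * t ^ (-(1:ℝ)/2)) t) = 4 * A := by
    rw [integral_indicator measurableSet_Ioo, Measure.restrict_restrict measurableSet_Ioo,
      Set.inter_eq_left.mpr Set.Ioo_subset_Ioi_self]
    rw [show (∫ t in Set.Ioo (0:ℝ) 1, 2 * A * t ^ (-(1:ℝ)/2))
        = 2 * A * ∫ t in Set.Ioo (0:ℝ) 1, t ^ (-(1:ℝ)/2) from integral_const_mul _ _]
    rw [← integral_Ioc_eq_integral_Ioo, ← intervalIntegral.integral_of_le (by norm_num : (0:ℝ) ≤ 1)]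
    rw [integral_rpow (Or.inl (by norm_num))]
    rw [Real.one_rpow, Real.zero_rpow (by norm_num)]
    ring
  have hI2 : (∫ t in Set.Ioi (0:ℝ),
      (Set.Ioc (0:ℝ) E).indicator (fun _ => (8:ℝ)) t) = 8 * E := by
    rw [integral_indicator measurableSet_Ioc, Measure.restrict_restrict measurableSet_Ioc,
      Set.inter_eq_left.mpr Set.Ioc_subset_Ioi_self]
    rw [setIntegral_const, Real.volume_real_Ioc, smul_eq_mul,
      max_eq_left (by linarith)]
    ring
  have hIg : (∫ t in Set.Ioi (0:ℝ), g t) = 4 * A + 8 * E := by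
    rw [hgdef, integral_add hg1.integrableOn hg2.integrableOn, hI1, hI2]
  rw [hIg]
  -- final arithmetic
  have hsp : Real.sqrt p ^ 2 = p := Real.sq_sqrt hp.le
  have hsp0 : 0 < Real.sqrt p := Real.sqrt_pos.mpr hp
  have hrhs : ω⁻¹ * ((C + 8) * ε / (γ * Real.sqrt p)) ^ 2
      = ω⁻¹ * ((C + 8) ^ 2 * ε ^ 2) / (γ ^ 2 * p) := by
    rw [div_pow, mul_pow γ, hsp]; ring
  have h4A : 4 * A = ω⁻¹ * (C ^ 2 * ε ^ 2) / (γ ^ 2 * (2 * p)) := by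
    rw [hAdef]; field_simp; ring
  rw [hrhs, h4A]
  have hω0 : 0 < ω⁻¹ := by positivity
  have hterm : ω⁻¹ * (C ^ 2 * ε ^ 2) / (γ ^ 2 * (2 * p))
      ≤ ω⁻¹ * ((C + 8) ^ 2 * ε ^ 2) / (γ ^ 2 * p) := by
    rw [div_le_div_iff₀ (by positivity) (by positivity)]
    have h1 : (0:ℝ) < ω⁻¹ * ε ^ 2 * γ ^ 2 * p := by positivity
    have h2 : (0:ℝ) ≤ C ^ 2 + 32 * C + 128 := by nlinarith [sq_nonneg C]
    nlinarith [mul_nonneg h1.le h2]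
  nlinarith [hE0, hC]
end

section
/- Let G be an n×n complex matrix, z₁ ≠ z₂ complex numbers with ‖G‖_op ≤ 8√n and |z₁|, |z₂| ≤ 8√n. Let v₁, v₂ ∈ ℂⁿ be unit vectors with v₂* (G − z₂I)_{/[1]} = 0 and v₁* (G − z₁I)_{/[1]} = 0 (where M_{/[1]} denotes M with first row set to zero), and write the orthogonal decomposition v₂ = α v₁ + β r with ⟨v₁, r⟩ = 0, ‖r‖ = 1, α, β ∈ ℂ. If ‖(I_n)_{/[1]} v₁‖₂ ≥ c for some c ∈ (0,1), then |β| ≥ c|z₁ − z₂| n^{−1/2} / 32. -/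
open Matrix

/-- The Euclidean norm of a complex vector. -/
noncomputable def cnorm {n : ℕ} (v : Fin n → ℂ) : ℝ :=
  Real.sqrt (∑ i, ‖v i‖ ^ 2)

namespace Stmt17Aux

lemma cnorm_nonneg {n : ℕ} (v : Fin n → ℂ) : 0 ≤ cnorm v := Real.sqrt_nonneg _

noncomputable def toE {n : ℕ} (v : Fin n → ℂ) : EuclideanSpace ℂ (Fin n) :=
  (WithLp.equiv 2 (Fin n → ℂ)).symm v

lemma cnorm_eq {n : ℕ} (v : Fin n → ℂ) : cnorm v = ‖toE v‖ := by
  rw [EuclideanSpace.norm_eq, cnorm]; congr 1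

lemma inner_toE {n : ℕ} (x y : Fin n → ℂ) :
    (inner ℂ (toE x) (toE y) : ℂ) = ∑ i, (starRingEnd ℂ) (x i) * y i := by
  simp [PiLp.inner_apply, RCLike.inner_apply]
  exact Finset.sum_congr rfl (fun i _ => mul_comm _ _)

lemma cnorm_smul {n : ℕ} (a : ℂ) (f : Fin n → ℂ) :
    cnorm (fun j => a * f j) = ‖a‖ * cnorm f := by
  simp only [cnorm, _root_.map_mul, norm_mul, mul_pow, ← Finset.mul_sum]
  rw [Real.sqrt_mul (by positivity), Real.sqrt_sq (by positivity)]

lemma cnorm_conj {n : ℕ} (f : Fin n → ℂ) :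
    cnorm (fun j => (starRingEnd ℂ) (f j)) = cnorm f := by
  simp [cnorm]

lemma cnorm_mono {n : ℕ} (f g : Fin n → ℂ)
    (h : ∀ i, ‖f i‖ ≤ ‖g i‖) : cnorm f ≤ cnorm g := by
  apply Real.sqrt_le_sqrt
  apply Finset.sum_le_sum
  intro i _
  have := h i
  have h0 : 0 ≤ ‖f i‖ := norm_nonneg _
  nlinarith

lemma adjoint_bound {n : ℕ} (G : Matrix (Fin n) (Fin n) ℂ) (K : ℝ) (hK : 0 ≤ K)
    (hG : ∀ v : Fin n → ℂ, cnorm (G.mulVec v) ≤ K * cnorm v) (v : Fin n → ℂ) :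
    cnorm (Gᴴ.mulVec v) ≤ K * cnorm v := by
  set w := Gᴴ.mulVec v with hw
  rcases le_or_gt (cnorm w) 0 with h | h
  · exact h.trans (by have := cnorm_nonneg v; positivity)
  have hsw : star w = Matrix.vecMul (star v) G := by
    simpa using Matrix.star_mulVec (Gᴴ) v
  have key : (inner ℂ (toE w) (toE w) : ℂ) = inner ℂ (toE v) (toE (G.mulVec w)) := by
    rw [inner_toE, inner_toE]
    calc ∑ i, (starRingEnd ℂ) (w i) * w i
        = dotProduct (star w) w := by simp [dotProduct]
      _ = dotProduct (Matrix.vecMul (star v) G) w := by rw [hsw]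
      _ = dotProduct (star v) (G.mulVec w) :=
          (dotProduct_mulVec _ _ _).symm
      _ = ∑ i, (starRingEnd ℂ) (v i) * (G.mulVec w) i := by simp [dotProduct]
  have hcs : ‖(inner ℂ (toE v) (toE (G.mulVec w)) : ℂ)‖ ≤ ‖toE v‖ * ‖toE (G.mulVec w)‖ :=
    norm_inner_le_norm _ _
  have hself : ‖(inner ℂ (toE w) (toE w) : ℂ)‖ = ‖toE w‖ ^ 2 := by
    rw [inner_self_eq_norm_sq_to_K]; simp
  rw [key] at hself
  have h2 : cnorm w ^ 2 ≤ cnorm v * (K * cnorm w) := by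
    rw [cnorm_eq, cnorm_eq]
    calc ‖toE w‖ ^ 2 = ‖(inner ℂ (toE v) (toE (G.mulVec w)) : ℂ)‖ := hself.symm
      _ ≤ ‖toE v‖ * ‖toE (G.mulVec w)‖ := hcs
      _ ≤ ‖toE v‖ * (K * ‖toE w‖) := by
          apply mul_le_mul_of_nonneg_left _ (norm_nonneg _)
          rw [← cnorm_eq, ← cnorm_eq]; exact hG w
  nlinarith [cnorm_nonneg v]

end Stmt17Aux

open Stmt17Aux

/-- Overlap bound for normal vectors at two spectral locations: with `‖G‖_op ≤ 8√n`,
`|z₁|, |z₂| ≤ 8√n`, unit vectors `v₁, v₂` annihilating (from the left) the matrices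
`(G − z₁I)_{/[1]}` and `(G − z₂I)_{/[1]}` (first row zeroed), orthogonal decomposition
`v₂ = αv₁ + βr`, and `‖(I_n)_{/[1]}v₁‖ ≥ c`, one has `|β| ≥ c|z₁ − z₂|n^{−1/2}/32`. -/
theorem stmt_17 (n : ℕ) [NeZero n] (G : Matrix (Fin n) (Fin n) ℂ)
    (z₁ z₂ : ℂ) (hz : z₁ ≠ z₂)
    (hzb₁ : ‖z₁‖ ≤ 8 * Real.sqrt n) (hzb₂ : ‖z₂‖ ≤ 8 * Real.sqrt n)
    (hG : ∀ v : Fin n → ℂ, cnorm (G.mulVec v) ≤ 8 * Real.sqrt n * cnorm v)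
    (v₁ v₂ r : Fin n → ℂ) (hv₁ : cnorm v₁ = 1) (hv₂ : cnorm v₂ = 1) (hr : cnorm r = 1)
    (α β : ℂ) (hdec : v₂ = α • v₁ + β • r)
    (horth : ∑ i, (starRingEnd ℂ) (v₁ i) * r i = 0)
    (hann₁ : Matrix.vecMul (fun i => (starRingEnd ℂ) (v₁ i))
        (fun i j => if i = 0 then 0 else (G - z₁ • 1) i j) = 0)
    (hann₂ : Matrix.vecMul (fun i => (starRingEnd ℂ) (v₂ i))
        (fun i j => if i = 0 then 0 else (G - z₂ • 1) i j) = 0)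
    (c : ℝ) (hc : c ∈ Set.Ioo (0 : ℝ) 1)
    (hmass : c ≤ cnorm (fun i => if i = (0 : Fin n) then 0 else v₁ i)) :
    c * ‖z₁ - z₂‖ / Real.sqrt n / 32 ≤ ‖β‖ := by
  obtain ⟨hc0, hc1⟩ := hc
  have hn0 : (0:ℝ) < n := by
    exact_mod_cast Nat.pos_of_ne_zero (NeZero.ne n)
  have hs : (0:ℝ) < Real.sqrt n := Real.sqrt_pos.mpr hn0
  set s : ℝ := Real.sqrt n with hsdef
  -- the zeroed matrix at z₂ and the vector m = r* M₂
  set M₂ : Matrix (Fin n) (Fin n) ℂ := fun i j => if i = 0 then 0 else (G - z₂ • 1) i j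
    with hM₂
  set m : Fin n → ℂ := Matrix.vecMul (fun i => (starRingEnd ℂ) (r i)) M₂ with hm
  set u : Fin n → ℂ := fun i => if i = (0 : Fin n) then 0 else v₁ i with hu
  set t : Fin n → ℂ := fun i => if i = (0 : Fin n) then 0 else r i with ht
  -- Pythagoras: |α|² + |β|² = 1
  have hpyth : ‖α‖ ^ 2 + ‖β‖ ^ 2 = 1 := by
    have hE : toE v₂ = α • toE v₁ + β • toE r := by rw [hdec]; rfl
    have hin : (inner ℂ (α • toE v₁) (β • toE r) : ℂ) = 0 := by
      rw [inner_smul_left, inner_smul_right, inner_toE, horth]; ring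
    have hpy : ‖toE v₂‖ ^ 2 = ‖α • toE v₁‖ ^ 2 + ‖β • toE r‖ ^ 2 := by
      rw [hE, @norm_add_sq ℂ, hin]; simp
    rw [← cnorm_eq, hv₂] at hpy
    rw [norm_smul, norm_smul, ← cnorm_eq, ← cnorm_eq, hv₁, hr] at hpy
    simp only [mul_one] at hpy
    linarith [hpy]
  -- key identity
  have hD : ∀ j, (starRingEnd ℂ) α * ((z₁ - z₂) * (starRingEnd ℂ) (u j))
      + (starRingEnd ℂ) β * m j = 0 := by
    intro j
    have h1 := congrFun hann₁ j
    have h2 := congrFun hann₂ j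
    simp only [hm, hM₂, hu, Matrix.vecMul, dotProduct, Pi.zero_apply] at h1 h2 ⊢
    rw [hdec] at h2
    simp only [Pi.add_apply, Pi.smul_apply, smul_eq_mul, map_add, _root_.map_mul,
      add_mul, Finset.sum_add_distrib, mul_assoc] at h2
    rw [← Finset.mul_sum, ← Finset.mul_sum] at h2
    have hpt : ∀ i : Fin n, (starRingEnd ℂ) (v₁ i) *
        ((if i = 0 then 0 else (G - z₂ • 1) i j) - (if i = 0 then 0 else (G - z₁ • 1) i j))
        = if i = j then (z₁ - z₂) * (starRingEnd ℂ) (if j = 0 then (0:ℂ) else v₁ j) else 0 := by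
      intro i
      by_cases hi : i = 0 <;> by_cases hij : i = j
      · subst hi; subst hij; simp
      · subst hi; simp [hij]
      · subst hij; simp [hi, Matrix.sub_apply, Matrix.smul_apply, Matrix.one_apply]; ring
      · simp [hi, hij, Matrix.sub_apply, Matrix.smul_apply, Matrix.one_apply]
    have hsplit : ∑ i, (starRingEnd ℂ) (v₁ i) * (if i = 0 then 0 else (G - z₂ • 1) i j)
        = (∑ i, (starRingEnd ℂ) (v₁ i) * (if i = 0 then 0 else (G - z₁ • 1) i j))
          + (z₁ - z₂) * (starRingEnd ℂ) (if j = 0 then (0:ℂ) else v₁ j) := by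
      rw [← sub_eq_iff_eq_add', ← Finset.sum_sub_distrib]
      calc ∑ i, ((starRingEnd ℂ) (v₁ i) * (if i = 0 then 0 else (G - z₂ • 1) i j)
              - (starRingEnd ℂ) (v₁ i) * (if i = 0 then 0 else (G - z₁ • 1) i j))
          = ∑ i : Fin n, if i = j then
              (z₁ - z₂) * (starRingEnd ℂ) (if j = 0 then (0:ℂ) else v₁ j) else 0 := by
            apply Finset.sum_congr rfl
            intro i _
            rw [← mul_sub, hpt i]
        _ = (z₁ - z₂) * (starRingEnd ℂ) (if j = 0 then (0:ℂ) else v₁ j) := by simp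
    rw [hsplit, h1, zero_add] at h2
    exact h2
  -- norm equality from hD
  have hnormeq : ‖α‖ * (‖z₁ - z₂‖ * cnorm u)
      = ‖β‖ * cnorm m := by
    have hfun : (fun j => ((starRingEnd ℂ) β) * m j)
        = fun j => (-((starRingEnd ℂ) α * (z₁ - z₂))) * (starRingEnd ℂ) (u j) := by
      funext j
      have := hD j
      ring_nf
      ring_nf at this
      linear_combination this
    have := congrArg cnorm hfun
    rw [cnorm_smul, cnorm_smul] at this
    rw [cnorm_conj] at this
    have habsa : ‖-((starRingEnd ℂ) α * (z₁ - z₂))‖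
        = ‖α‖ * ‖z₁ - z₂‖ := by
      simp [Complex.norm_conj]
    rw [habsa, mul_assoc, Complex.norm_conj] at this
    linarith [this]
  -- bound on cnorm m
  have hmb : cnorm m ≤ 16 * s := by
    have hstar : (fun j => (starRingEnd ℂ) (m j)) = Matrix.mulVec (M₂ᴴ) r := by
      have := Matrix.star_vecMul M₂ (fun i => (starRingEnd ℂ) (r i))
      have h2 : star (fun i => (starRingEnd ℂ) (r i)) = r := by
        funext i; simp
      rw [h2] at this
      rw [← this]; rfl
    have hdecomp : Matrix.mulVec (M₂ᴴ) r
        = fun j => (Gᴴ.mulVec t) j - (starRingEnd ℂ) z₂ * t j := by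
      funext j
      simp only [Matrix.mulVec, dotProduct, Matrix.conjTranspose_apply]
      have hpt : ∀ i : Fin n, (starRingEnd ℂ) (M₂ i j) * r i
          = (starRingEnd ℂ) (G i j) * t i - (if i = j then (starRingEnd ℂ) z₂ * t i else 0) := by
        intro i
        by_cases hi : i = 0 <;> by_cases hij : i = j
        · subst hi; subst hij; simp [hM₂, ht]
        · subst hi; simp [hM₂, ht]
        · subst hij; simp [hM₂, ht, hi, Matrix.sub_apply, Matrix.smul_apply,
            Matrix.one_apply, map_sub, _root_.map_mul]; ring
        · simp [hM₂, ht, hi, hij, Matrix.sub_apply, Matrix.smul_apply, Matrix.one_apply]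
      calc ∑ i, (starRingEnd ℂ) (M₂ i j) * r i
          = ∑ i, ((starRingEnd ℂ) (G i j) * t i
              - (if i = j then (starRingEnd ℂ) z₂ * t i else 0)) :=
            Finset.sum_congr rfl (fun i _ => hpt i)
        _ = (∑ i, (starRingEnd ℂ) (G i j) * t i) - (starRingEnd ℂ) z₂ * t j := by
            rw [Finset.sum_sub_distrib]; simp
        _ = (Gᴴ.mulVec t) j - (starRingEnd ℂ) z₂ * t j := by
            simp [Matrix.mulVec, dotProduct, Matrix.conjTranspose_apply]
    have ht1 : cnorm t ≤ 1 := by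
      rw [← hr]
      apply cnorm_mono
      intro i
      by_cases hi : i = 0 <;> simp [ht, hi]
    have hGt : cnorm (Gᴴ.mulVec t) ≤ 8 * s := by
      have := adjoint_bound G (8 * s) (by positivity) hG t
      calc cnorm (Gᴴ.mulVec t) ≤ 8 * s * cnorm t := this
        _ ≤ 8 * s * 1 := by
            apply mul_le_mul_of_nonneg_left ht1 (by positivity)
        _ = 8 * s := by ring
    have hz2t : cnorm (fun j => (starRingEnd ℂ) z₂ * t j) ≤ 8 * s := by
      rw [cnorm_smul]
      calc ‖(starRingEnd ℂ) z₂‖ * cnorm t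
          ≤ (8 * s) * 1 := by
            apply mul_le_mul _ ht1 (cnorm_nonneg _) (by positivity)
            rw [Complex.norm_conj]; exact hzb₂
        _ = 8 * s := by ring
    have hcm : cnorm m = cnorm (fun j => (starRingEnd ℂ) (m j)) := (cnorm_conj m).symm
    rw [hcm, hstar, hdecomp]
    have htri : cnorm (fun j => (Gᴴ.mulVec t) j - (starRingEnd ℂ) z₂ * t j)
        ≤ cnorm (Gᴴ.mulVec t) + cnorm (fun j => (starRingEnd ℂ) z₂ * t j) := by
      rw [cnorm_eq, cnorm_eq, cnorm_eq]
      have := norm_sub_le (toE (Gᴴ.mulVec t)) (toE fun j => (starRingEnd ℂ) z₂ * t j)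
      exact this
    linarith
  -- assemble
  have hcu : c ≤ cnorm u := hmass
  have hkey : ‖α‖ * (‖z₁ - z₂‖ * c) ≤ ‖β‖ * (16 * s) := by
    calc ‖α‖ * (‖z₁ - z₂‖ * c)
        ≤ ‖α‖ * (‖z₁ - z₂‖ * cnorm u) := by
          apply mul_le_mul_of_nonneg_left _ (norm_nonneg _)
          exact mul_le_mul_of_nonneg_left hcu (norm_nonneg _)
      _ = ‖β‖ * cnorm m := hnormeq
      _ ≤ ‖β‖ * (16 * s) :=
          mul_le_mul_of_nonneg_left hmb (norm_nonneg _)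
  have habsz : ‖z₁ - z₂‖ ≤ 16 * s := by
    calc ‖z₁ - z₂‖ ≤ ‖z₁‖ + ‖z₂‖ := by
          simpa [sub_eq_add_neg] using norm_add_le z₁ (-z₂)
      _ ≤ 16 * s := by linarith
  have hz0 : 0 < ‖z₁ - z₂‖ := by
    rw [norm_pos_iff]
    exact sub_ne_zero.mpr hz
  rcases le_or_gt (1/2 : ℝ) (‖β‖) with hb | hb
  · have hhalf : c * ‖z₁ - z₂‖ / s / 32 ≤ c / 2 := by
      rw [div_div, div_le_iff₀ (by positivity)]
      nlinarith [habsz, hc0.le]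
    calc c * ‖z₁ - z₂‖ / s / 32 ≤ c / 2 := hhalf
      _ ≤ 1/2 := by linarith
      _ ≤ ‖β‖ := hb
  · have hα : (1/2 : ℝ) ≤ ‖α‖ := by
      nlinarith [norm_nonneg α, norm_nonneg β]
    rw [div_div, div_le_iff₀ (by positivity)]
    have hX : 0 ≤ ‖z₁ - z₂‖ * c := by positivity
    have h12 : (1/2 : ℝ) * (‖z₁ - z₂‖ * c) ≤ ‖β‖ * (16 * s) :=
      le_trans (mul_le_mul_of_nonneg_right hα hX) hkey
    linarith
end
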